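/- arXiv:math/0608249 — 5 statements merged into one kernel-verified Lean document; each statement's English description precedes it below -/
import Mathlib

section
/- For Lebesgue-almost every real number x in [0,1), x is normal to every integer base q ≥ 2 (Borel's theorem on normal numbers). -/
open Filter MeasureTheory Topology
open scoped Classical

open Finset ProbabilityTheory
open scoped ENNReal

/-- The `(n+1)`-st digit (i.e. `ε_{n+1}`, `0`-indexed by `n`) of the base-`q` expansion of `x`,
chosen as the greedy expansion (never eventually equal to `q - 1`). -/
noncomputable def qdigit (q : ℕ) (x : ℝ) (n : ℕ) : ℕ :=
  (⌊x * (q : ℝ) ^ (n + 1)⌋).toNat % q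


lemma count_fun {N q : ℕ} {ι : Type*} [Fintype ι] (pF : ι → Fin N)
    (hinj : Function.Injective pF) (dF : ι → Fin q) :
    ((Finset.univ : Finset (Fin N → Fin q)).filter fun g => ∀ i, g (pF i) = dF i).card
      = q ^ (N - Fintype.card ι) := by
  classical
  rw [← Fintype.card_subtype]
  have e : {g : Fin N → Fin q // ∀ i, g (pF i) = dF i} ≃
      ({j : Fin N // j ∉ Set.range pF} → Fin q) :=
    { toFun := fun g j => g.1 j.1
      invFun := fun h => ⟨fun j => if hj : ∃ y, pF y = j then dF hj.choose else h ⟨j, hj⟩, by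
        intro i
        dsimp only
        split
        · next hj => exact congrArg dF (hinj hj.choose_spec)
        · next hj => exact absurd ⟨i, rfl⟩ hj⟩
      left_inv := by
        rintro ⟨g, hg⟩
        apply Subtype.ext
        funext j
        dsimp only
        split
        · next hj => rw [← hg, hj.choose_spec]
        · rfl
      right_inv := by
        intro h
        funext j
        dsimp only
        split
        · next hj => exact absurd hj j.2
        · rfl }
  rw [Fintype.card_congr e, Fintype.card_fun, Fintype.card_fin]
  congr 1
  rw [Fintype.card_subtype_compl]
  congr 1
  · exact Fintype.card_fin N
  · have := Set.card_range_of_injective hinj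
    convert this using 2

lemma count_digits {q : ℕ} (N : ℕ) {ι : Type*} [Fintype ι] (pos : ι → ℕ)
    (hpos : ∀ i, pos i < N) (hinj : Function.Injective pos) (d : ι → ℕ)
    (hd : ∀ i, d i < q) :
    (((Finset.range (q ^ N)).filter fun k => ∀ i, k / q ^ pos i % q = d i).card)
      = q ^ (N - Fintype.card ι) := by
  classical
  -- transfer from range (q^N) to Fin (q^N)
  have h1 : ((Finset.range (q ^ N)).filter fun k => ∀ i, k / q ^ pos i % q = d i)
      = ((Finset.univ : Finset (Fin (q ^ N))).filter
          fun (k : Fin (q ^ N)) => ∀ i, (k : ℕ) / q ^ pos i % q = d i).image Fin.val := by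
    ext a
    simp only [mem_filter, mem_range, mem_image, Finset.mem_univ, true_and]
    constructor
    · rintro ⟨ha, hP⟩; exact ⟨⟨a, ha⟩, hP, rfl⟩
    · rintro ⟨k, hP, rfl⟩; exact ⟨k.2, hP⟩
  rw [h1, Finset.card_image_of_injective _ Fin.val_injective]
  -- transfer to functions
  have h2 : ((Finset.univ : Finset (Fin (q ^ N))).filter
        fun (k : Fin (q ^ N)) => ∀ i, (k : ℕ) / q ^ pos i % q = d i).card
      = ((Finset.univ : Finset (Fin N → Fin q)).filter
          fun g => ∀ i, g ⟨pos i, hpos i⟩ = ⟨d i, hd i⟩).card := by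
    apply Finset.card_bij (fun k _ => finFunctionFinEquiv.symm k)
    · intro k hk
      simp only [mem_filter, Finset.mem_univ, true_and] at hk ⊢
      intro i
      apply Fin.ext
      rw [finFunctionFinEquiv_symm_apply_val]
      exact hk i
    · intro a ha b hb hab
      exact finFunctionFinEquiv.symm.injective hab
    · intro g hg
      refine ⟨finFunctionFinEquiv g, ?_, by simp⟩
      simp only [mem_filter, Finset.mem_univ, true_and] at hg ⊢
      intro i
      have := congrArg Fin.val (congrFun (finFunctionFinEquiv.symm_apply_apply g) ⟨pos i, hpos i⟩)
      rw [finFunctionFinEquiv_symm_apply_val] at this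
      rw [this, hg i]
  rw [h2]
  have := count_fun (fun i => (⟨pos i, hpos i⟩ : Fin N))
    (fun a b hab => hinj (congrArg Fin.val hab)) (fun i => (⟨d i, hd i⟩ : Fin q))
  simpa using this




lemma qdigit_eq_nfloor (q : ℕ) (x : ℝ) (n : ℕ) :
    qdigit q x n = ⌊x * (q : ℝ) ^ (n + 1)⌋₊ % q := by
  rw [qdigit, Int.floor_toNat]

lemma qdigit_eq_of_lt {q : ℕ} (hq : 0 < q) (x : ℝ) {n N : ℕ} (hn : n < N) :
    qdigit q x n = ⌊x * (q : ℝ) ^ N⌋₊ / q ^ (N - 1 - n) % q := by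
  rw [qdigit_eq_nfloor]
  congr 1
  have hqR : (0 : ℝ) < (q : ℝ) := by exact_mod_cast hq
  have hpow : (q : ℝ) ^ (n + 1) = (q : ℝ) ^ N / (q ^ (N - 1 - n) : ℕ) := by
    push_cast
    rw [eq_div_iff (by positivity), ← pow_add]
    congr 1
    omega
  rw [hpow, ← mul_div_assoc, Nat.floor_div_natCast]

lemma measurable_qdigit (q : ℕ) (n : ℕ) : Measurable fun x : ℝ => qdigit q x n := by
  have h1 : Measurable fun x : ℝ => x * (q : ℝ) ^ (n + 1) := measurable_id.mul_const _
  exact (measurable_from_top (f := fun z : ℤ => z.toNat % q)).comp (Int.measurable_floor.comp h1)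

lemma meas_floor_event {q : ℕ} (hq : 0 < q) (N : ℕ) (P : ℕ → Prop) :
    (volume.restrict (Set.Ico (0 : ℝ) 1)) {x | P ⌊x * (q : ℝ) ^ N⌋₊}
      = (((Finset.range (q ^ N)).filter P).card : ℝ≥0∞)
          * ENNReal.ofReal (((q : ℝ) ^ N)⁻¹) := by
  have hqR : (0 : ℝ) < (q : ℝ) ^ N := by positivity
  have hmeas : MeasurableSet {x : ℝ | P ⌊x * (q : ℝ) ^ N⌋₊} := by
    have : Measurable fun x : ℝ => ⌊x * (q : ℝ) ^ N⌋₊ :=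
      Nat.measurable_floor.comp (measurable_id.mul_const _)
    exact this (MeasurableSet.of_discrete (s := {k | P k}))
  rw [Measure.restrict_apply hmeas]
  have hset : {x : ℝ | P ⌊x * (q : ℝ) ^ N⌋₊} ∩ Set.Ico 0 1
      = ⋃ k ∈ (Finset.range (q ^ N)).filter P,
          Set.Ico ((k : ℝ) / (q : ℝ) ^ N) (((k : ℝ) + 1) / (q : ℝ) ^ N) := by
    ext x
    simp only [Set.mem_inter_iff, Set.mem_setOf_eq, Set.mem_Ico, Set.mem_iUnion,
      Finset.mem_filter, Finset.mem_range, exists_prop]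
    constructor
    · rintro ⟨hP, hx0, hx1⟩
      refine ⟨⌊x * (q : ℝ) ^ N⌋₊, ⟨?_, hP⟩, ?_, ?_⟩
      · rw [Nat.floor_lt (by positivity)]
        have := mul_lt_mul_of_pos_right hx1 hqR
        simpa using this
      · rw [div_le_iff₀ hqR]
        exact Nat.floor_le (by positivity)
      · rw [lt_div_iff₀ hqR]
        push_cast
        exact Nat.lt_floor_add_one _
    · rintro ⟨k, ⟨hk, hP⟩, hxl, hxu⟩
      have hx0 : (0 : ℝ) ≤ x := le_trans (by positivity) hxl
      have hfloor : ⌊x * (q : ℝ) ^ N⌋₊ = k := by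
        rw [Nat.floor_eq_iff (by positivity)]
        constructor
        · rwa [div_le_iff₀ hqR] at hxl
        · rw [lt_div_iff₀ hqR] at hxu
          exact_mod_cast hxu
      refine ⟨by rw [hfloor]; exact hP, hx0, ?_⟩
      calc x < ((k : ℝ) + 1) / (q : ℝ) ^ N := hxu
        _ ≤ (q : ℝ) ^ N / (q : ℝ) ^ N := by
            gcongr
            exact_mod_cast Nat.succ_le_of_lt hk
        _ = 1 := div_self (ne_of_gt hqR)
  rw [hset, measure_biUnion_finset ?hd ?hm]
  · rw [Finset.sum_congr rfl (fun k _ => ?_), Finset.sum_const, nsmul_eq_mul]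
    show volume _ = ENNReal.ofReal (((q : ℝ) ^ N)⁻¹)
    rw [Real.volume_Ico]
    congr 1
    field_simp
    ring
  case hd =>
    intro a ha b hb hab
    simp only [Finset.coe_filter, Set.mem_setOf_eq, Finset.mem_range] at ha hb
    refine Set.disjoint_left.2 fun x hxa hxb => hab ?_
    obtain ⟨hal, hau⟩ := hxa
    obtain ⟨hbl, hbu⟩ := hxb
    have hx0a : 0 ≤ (a : ℝ) / (q : ℝ) ^ N := by positivity
    have hx0 : (0 : ℝ) ≤ x := le_trans hx0a hal
    have : ⌊x * (q : ℝ) ^ N⌋₊ = a := by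
      rw [Nat.floor_eq_iff (mul_nonneg hx0 hqR.le)]
      exact ⟨by rwa [div_le_iff₀ hqR] at hal, by
        rw [lt_div_iff₀ hqR] at hau; exact_mod_cast hau⟩
    have h2 : ⌊x * (q : ℝ) ^ N⌋₊ = b := by
      rw [Nat.floor_eq_iff (mul_nonneg hx0 hqR.le)]
      exact ⟨by rwa [div_le_iff₀ hqR] at hbl, by
        rw [lt_div_iff₀ hqR] at hbu; exact_mod_cast hbu⟩
    omega
  case hm =>
    exact fun k _ => measurableSet_Ico

/- Big cylinder lemma -/
lemma meas_cylinder {q : ℕ} (hq : 0 < q) {ι : Type*} [Fintype ι] (ns : ι → ℕ)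
    (hinj : Function.Injective ns) (ds : ι → ℕ) (hd : ∀ i, ds i < q) :
    (volume.restrict (Set.Ico (0 : ℝ) 1)) {x | ∀ i, qdigit q x (ns i) = ds i}
      = ENNReal.ofReal (((q : ℝ) ^ Fintype.card ι)⁻¹) := by
  classical
  set N : ℕ := (Finset.univ.sup ns) + 1 with hN
  have hns : ∀ i, ns i < N := fun i =>
    Nat.lt_succ_of_le (Finset.le_sup (Finset.mem_univ i))
  have hcard : Fintype.card ι ≤ N := by
    have : Function.Injective fun i => (⟨ns i, hns i⟩ : Fin N) :=
      fun a b hab => hinj (congrArg Fin.val hab)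
    simpa using Fintype.card_le_of_injective _ this
  have hsets : {x : ℝ | ∀ i, qdigit q x (ns i) = ds i}
      = {x : ℝ | (fun k => ∀ i, k / q ^ (N - 1 - ns i) % q = ds i) ⌊x * (q : ℝ) ^ N⌋₊} := by
    ext x
    simp only [Set.mem_setOf_eq]
    constructor
    · intro h i; rw [← qdigit_eq_of_lt hq x (hns i)]; exact h i
    · intro h i; rw [qdigit_eq_of_lt hq x (hns i)]; exact h i
  have hmf := meas_floor_event hq N (fun k => ∀ i, k / q ^ (N - 1 - ns i) % q = ds i)
  have hpos' : ∀ i, N - 1 - ns i < N := fun i => by omega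
  have hinj' : Function.Injective fun i => N - 1 - ns i := by
    intro a b hab
    have h1 := hns a
    have h2 := hns b
    simp only [] at hab
    exact hinj (by omega)
  rw [hsets, hmf, Finset.filter_congr_decidable, count_digits N _ hpos' hinj' ds hd]
  have hqR : (0 : ℝ) < (q : ℝ) := by exact_mod_cast hq
  rw [← ENNReal.ofReal_natCast, ← ENNReal.ofReal_mul (by positivity)]
  congr 1
  have hpow : ((q ^ (N - Fintype.card ι) : ℕ) : ℝ) * ((q : ℝ) ^ Fintype.card ι)
      = (q : ℝ) ^ N := by
    push_cast
    rw [← pow_add]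
    congr 1
    omega
  have h1 : ((q : ℝ) ^ N)⁻¹ * (q : ℝ) ^ N = 1 := inv_mul_cancel₀ (by positivity)
  have h2 : ((q : ℝ) ^ Fintype.card ι) ≠ 0 := by positivity
  field_simp
  rw [← hpow]


instance : IsProbabilityMeasure (volume.restrict (Set.Ico (0 : ℝ) 1)) := by
  constructor
  rw [Measure.restrict_apply_univ, Real.volume_Ico]
  norm_num

/-- preimage of an indicator function -/
lemma indicator_preimage_cases (A : Set ℝ) (u : Set ℝ) :
    (A.indicator fun _ => (1 : ℝ)) ⁻¹' u =
      if (1 : ℝ) ∈ u then (if (0 : ℝ) ∈ u then Set.univ else A)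
      else (if (0 : ℝ) ∈ u then Aᶜ else ∅) := by
  ext x
  by_cases hx : x ∈ A <;> by_cases h1 : (1 : ℝ) ∈ u <;> by_cases h0 : (0 : ℝ) ∈ u <;>
    simp [Set.indicator_apply, hx, h1, h0]

lemma comap_indicator_le (A : Set ℝ) :
    MeasurableSpace.comap (A.indicator fun _ => (1 : ℝ)) (borel ℝ) ≤
      MeasurableSpace.generateFrom {A} := by
  rintro t ⟨u, hu, rfl⟩
  rw [indicator_preimage_cases]
  have hA : MeasurableSet[MeasurableSpace.generateFrom {A}] A :=
    MeasurableSpace.measurableSet_generateFrom rfl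
  split_ifs
  · exact MeasurableSet.univ
  · exact hA
  · exact hA.compl
  · exact @MeasurableSet.empty ℝ (MeasurableSpace.generateFrom {A})

lemma indepFun_indicator_of_indepSet {μ : Measure ℝ} {A B : Set ℝ}
    (h : IndepSet A B μ) :
    IndepFun (A.indicator fun _ => (1 : ℝ)) (B.indicator fun _ => (1 : ℝ)) μ := by
  have h' : ProbabilityTheory.Indep (MeasurableSpace.generateFrom {A})
      (MeasurableSpace.generateFrom {B}) μ := h
  have := indep_of_indep_of_le_left h' (comap_indicator_le A)
  have h2 := indep_of_indep_of_le_right this (comap_indicator_le B)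
  exact h2

lemma identDistrib_indicator {μ : Measure ℝ} [IsProbabilityMeasure μ] {A B : Set ℝ}
    (hA : MeasurableSet A) (hB : MeasurableSet B) (hAB : μ A = μ B) :
    ProbabilityTheory.IdentDistrib (A.indicator fun _ => (1 : ℝ))
      (B.indicator fun _ => (1 : ℝ)) μ μ := by
  refine ⟨(measurable_const.indicator hA).aemeasurable,
    (measurable_const.indicator hB).aemeasurable, ?_⟩
  ext u hu
  rw [Measure.map_apply (measurable_const.indicator hA) hu,
    Measure.map_apply (measurable_const.indicator hB) hu,
    indicator_preimage_cases, indicator_preimage_cases]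
  split_ifs
  · rfl
  · exact hAB
  · rw [measure_compl hA (measure_ne_top μ A), measure_compl hB (measure_ne_top μ B), hAB]
  · rfl


private noncomputable def Ssum (u : ℕ → ℝ) (N : ℕ) : ℝ := ∑ n ∈ Finset.range N, u n

private lemma Ssum_block {m : ℕ} (u : ℕ → ℝ) (J : ℕ) :
    Ssum u (m * J) = ∑ r ∈ Finset.range m, ∑ j ∈ Finset.range J, u (j * m + r) := by
  induction J with
  | zero => simp [Ssum]
  | succ J ih =>
    have hmJ : m * (J + 1) = m * J + m := by ring
    rw [Ssum, hmJ, Finset.sum_range_add, ← Ssum, ih,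
      Finset.sum_congr rfl (fun r _ => Finset.sum_range_succ (fun j => u (j * m + r)) J),
      Finset.sum_add_distrib]
    congr 1
    exact Finset.sum_congr rfl fun r _ => congrArg u (by ring)

lemma freq_combine {m : ℕ} (hm : 0 < m) (u : ℕ → ℝ) (h0 : ∀ n, 0 ≤ u n)
    (h1 : ∀ n, u n ≤ 1) (p : ℝ)
    (h : ∀ r < m, Tendsto (fun J : ℕ => (∑ j ∈ Finset.range J, u (j * m + r)) / J)
      atTop (𝓝 p)) :
    Tendsto (fun N : ℕ => (∑ n ∈ Finset.range N, u n) / N) atTop (𝓝 p) := by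
  have hmR : (0 : ℝ) < m := by exact_mod_cast hm
  have hSmono : Monotone (Ssum u) := fun a b hab =>
    Finset.sum_le_sum_of_subset_of_nonneg (Finset.range_subset_range.2 hab) (fun i _ _ => h0 i)
  have hSnonneg : ∀ N, 0 ≤ Ssum u N := fun N => Finset.sum_nonneg fun i _ => h0 i
  have hSadd : ∀ a, Ssum u (a + m) ≤ Ssum u a + m := by
    intro a
    rw [Ssum, Finset.sum_range_add, ← Ssum]
    have : ∑ x ∈ Finset.range m, u (a + x) ≤ ∑ x ∈ Finset.range m, (1 : ℝ) :=
      Finset.sum_le_sum (fun i _ => h1 _)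
    simp only [Finset.sum_const, Finset.card_range, nsmul_eq_mul, mul_one] at this
    linarith
  have hSJ : Tendsto (fun J : ℕ => Ssum u (m * J) / J) atTop (𝓝 (m * p)) := by
    have : Tendsto (fun J : ℕ => ∑ r ∈ Finset.range m, (∑ j ∈ Finset.range J, u (j * m + r)) / J)
        atTop (𝓝 (∑ r ∈ Finset.range m, p)) :=
      tendsto_finset_sum _ (fun r hr => h r (Finset.mem_range.1 hr))
    simp only [Finset.sum_const, Finset.card_range, nsmul_eq_mul] at this
    apply this.congr
    intro J
    rw [Ssum_block, Finset.sum_div]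
  have hdiv : Tendsto (fun N : ℕ => N / m) atTop atTop := by
    apply Filter.tendsto_atTop_atTop.2
    intro b
    exact ⟨m * b, fun n hn => (Nat.le_div_iff_mul_le hm).2
      (le_trans (le_of_eq (Nat.mul_comm b m)) hn)⟩
  have hL1 : Tendsto (fun N : ℕ => Ssum u (m * (N / m)) / (N / m : ℕ)) atTop (𝓝 (m * p)) :=
    hSJ.comp hdiv
  -- (N/m)/N → 1/m
  have hL2 : Tendsto (fun N : ℕ => ((N / m : ℕ) : ℝ) / N) atTop (𝓝 ((m : ℝ)⁻¹)) := by
    have key : ∀ N : ℕ, 1 ≤ N → ((N / m : ℕ) : ℝ) / N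
        = (m : ℝ)⁻¹ - ((N % m : ℕ) : ℝ) / (m * N) := by
      intro N hN
      have hNR : (0 : ℝ) < N := by exact_mod_cast hN
      have hmod : (m : ℝ) * ((N / m : ℕ) : ℝ) + ((N % m : ℕ) : ℝ) = (N : ℝ) := by
        exact_mod_cast Nat.div_add_mod N m
      field_simp
      nlinarith [hmod]
    have herr : Tendsto (fun N : ℕ => ((N % m : ℕ) : ℝ) / (m * N)) atTop (𝓝 0) := by
      apply tendsto_of_tendsto_of_tendsto_of_le_of_le' tendsto_const_nhds
        (tendsto_const_div_atTop_nhds_zero_nat (1 : ℝ))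
      · filter_upwards with N
        positivity
      · filter_upwards [eventually_ge_atTop 1] with N hN
        have hNR : (0 : ℝ) < N := by exact_mod_cast hN
        rw [div_le_div_iff₀ (by positivity) hNR]
        have : ((N % m : ℕ) : ℝ) ≤ (m : ℝ) - 1 := by
          have := Nat.mod_lt N hm
          have : (N % m : ℕ) ≤ m - 1 := by omega
          calc ((N % m : ℕ) : ℝ) ≤ ((m - 1 : ℕ) : ℝ) := by exact_mod_cast this
            _ ≤ (m : ℝ) - 1 := by
                have : (1 : ℕ) ≤ m := hm
                push_cast [Nat.cast_sub this]
                linarith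
        nlinarith
    have := (tendsto_const_nhds (x := (m : ℝ)⁻¹)).sub herr
    rw [sub_zero] at this
    apply this.congr'
    filter_upwards [eventually_ge_atTop 1] with N hN
    rw [key N hN]
  -- the main squeeze
  have hmain : Tendsto (fun N : ℕ => Ssum u (m * (N / m)) / N) atTop (𝓝 p) := by
    have heq : ∀ N : ℕ, Ssum u (m * (N / m)) / N
        = (Ssum u (m * (N / m)) / (N / m : ℕ)) * (((N / m : ℕ) : ℝ) / N) := by
      intro N
      by_cases hJ : (N / m : ℕ) = 0
      · simp [hJ, Ssum]
      · have : ((N / m : ℕ) : ℝ) ≠ 0 := by exact_mod_cast hJ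
        field_simp
    have := hL1.mul hL2
    have harith : (m : ℝ) * p * (m : ℝ)⁻¹ = p := by field_simp
    rw [harith] at this
    exact this.congr (fun N => (heq N).symm)
  have hmain2 : Tendsto (fun N : ℕ => (Ssum u (m * (N / m)) + m) / N) atTop (𝓝 p) := by
    have h2 : Tendsto (fun N : ℕ => Ssum u (m * (N / m)) / N + (m : ℝ) / N) atTop (𝓝 (p + 0)) :=
      hmain.add (tendsto_const_div_atTop_nhds_zero_nat (m : ℝ))
    rw [add_zero] at h2
    apply h2.congr
    intro N
    rw [← add_div]
  apply tendsto_of_tendsto_of_tendsto_of_le_of_le' hmain hmain2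
  · filter_upwards [eventually_ge_atTop 1] with N hN
    have hNR : (0 : ℝ) < N := by exact_mod_cast hN
    have hle : Ssum u (m * (N / m)) ≤ Ssum u N := hSmono (Nat.mul_div_le N m)
    show _ ≤ Ssum u N / (N : ℝ)
    gcongr
  · filter_upwards [eventually_ge_atTop 1] with N hN
    have hNR : (0 : ℝ) < N := by exact_mod_cast hN
    have hle : Ssum u N ≤ Ssum u (m * (N / m)) + m := by
      have h1 : N ≤ m * (N / m) + m := by
        calc N = m * (N / m) + N % m := (Nat.div_add_mod N m).symm
          _ ≤ m * (N / m) + m := Nat.add_le_add_left (le_of_lt (Nat.mod_lt N hm)) _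
      calc Ssum u N ≤ Ssum u (m * (N / m) + m) := hSmono h1
        _ ≤ Ssum u (m * (N / m)) + m := hSadd _
    show Ssum u N / (N : ℝ) ≤ _
    gcongr

lemma measurableSet_block (q m : ℕ) (d : Fin m → ℕ) (n : ℕ) :
    MeasurableSet {x : ℝ | ∀ i : Fin m, qdigit q x (n + (i : ℕ)) = d i} := by
  have : {x : ℝ | ∀ i : Fin m, qdigit q x (n + (i : ℕ)) = d i}
      = ⋂ i : Fin m, (fun x => qdigit q x (n + (i : ℕ))) ⁻¹' {d i} := by
    ext x; simp [Set.mem_iInter]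
  rw [this]
  exact MeasurableSet.iInter fun i =>
    (measurable_qdigit q _) (measurableSet_singleton _)

lemma block_decomp {m : ℕ} (hm : 0 < m) (r : ℕ) :
    ∀ (a b i i' : ℕ), i < m → i' < m → a * m + r + i = b * m + r + i' → a = b ∧ i = i' := by
  intro a b i i' hi hi' hE
  have hE' : m * a + i = m * b + i' := by
    have h1 : a * m = m * a := Nat.mul_comm a m
    have h2 : b * m = m * b := Nat.mul_comm b m
    omega
  have hab : a = b := by
    have h1 : (m * a + i) / m = a := by
      rw [Nat.mul_add_div hm, Nat.div_eq_of_lt hi, Nat.add_zero]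
    have h2 : (m * b + i') / m = b := by
      rw [Nat.mul_add_div hm, Nat.div_eq_of_lt hi', Nat.add_zero]
    rw [← h1, hE', h2]
  refine ⟨hab, ?_⟩
  subst hab
  omega

lemma meas_block {q m : ℕ} (hq : 0 < q) (hm : 0 < m) (d : Fin m → ℕ)
    (hd : ∀ i, d i < q) (n : ℕ) :
    (volume.restrict (Set.Ico (0 : ℝ) 1))
        {x : ℝ | ∀ i : Fin m, qdigit q x (n + (i : ℕ)) = d i}
      = ENNReal.ofReal (((q : ℝ) ^ m)⁻¹) := by
  have h := meas_cylinder hq (fun i : Fin m => n + (i : ℕ))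
    (fun a b hab => by
      apply Fin.ext
      have h' : n + (a : ℕ) = n + (b : ℕ) := hab
      omega) (fun i => d i) hd
  simpa using h

lemma meas_block_inter {q m : ℕ} (hq : 0 < q) (hm : 0 < m) (d : Fin m → ℕ)
    (hd : ∀ i, d i < q) {r j k : ℕ} (hjk : j ≠ k) :
    (volume.restrict (Set.Ico (0 : ℝ) 1))
        ({x : ℝ | ∀ i : Fin m, qdigit q x (j * m + r + (i : ℕ)) = d i}
          ∩ {x : ℝ | ∀ i : Fin m, qdigit q x (k * m + r + (i : ℕ)) = d i})
      = ENNReal.ofReal (((q : ℝ) ^ m)⁻¹) * ENNReal.ofReal (((q : ℝ) ^ m)⁻¹) := by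
  set ns : Fin m ⊕ Fin m → ℕ :=
    Sum.elim (fun i => j * m + r + (i : ℕ)) (fun i => k * m + r + (i : ℕ)) with hns
  set ds : Fin m ⊕ Fin m → ℕ := Sum.elim (fun i => d i) (fun i => d i) with hds
  have hinj : Function.Injective ns := by
    rintro (a | a) (b | b) hab <;> simp only [hns, Sum.elim_inl, Sum.elim_inr] at hab
    · exact congrArg Sum.inl (Fin.ext (block_decomp hm r j j a b a.2 b.2 hab).2)
    · exact absurd (block_decomp hm r j k a b a.2 b.2 hab).1 hjk
    · exact absurd (block_decomp hm r k j a b a.2 b.2 hab).1 (Ne.symm hjk)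
    · exact congrArg Sum.inr (Fin.ext (block_decomp hm r k k a b a.2 b.2 hab).2)
  have hds' : ∀ i, ds i < q := by rintro (a | a) <;> exact hd a
  have hset : {x : ℝ | ∀ i : Fin m, qdigit q x (j * m + r + (i : ℕ)) = d i}
        ∩ {x : ℝ | ∀ i : Fin m, qdigit q x (k * m + r + (i : ℕ)) = d i}
      = {x : ℝ | ∀ p, qdigit q x (ns p) = ds p} := by
    ext x
    simp only [Set.mem_inter_iff, Set.mem_setOf_eq, Sum.forall, hns, hds,
      Sum.elim_inl, Sum.elim_inr]
  rw [hset, meas_cylinder hq ns hinj ds hds']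
  rw [← ENNReal.ofReal_mul (by positivity)]
  congr 1
  have hc : Fintype.card (Fin m ⊕ Fin m) = m + m := by simp
  rw [hc, pow_add, mul_inv]

lemma slln_residue {q m : ℕ} (hq : 2 ≤ q) (hm : 0 < m) (d : Fin m → ℕ)
    (hd : ∀ i, d i < q) (r : ℕ) :
    ∀ᵐ x ∂(volume.restrict (Set.Ico (0 : ℝ) 1)),
      Tendsto (fun J : ℕ =>
          (∑ j ∈ Finset.range J,
            (if ∀ i : Fin m, qdigit q x (j * m + r + (i : ℕ)) = d i then (1 : ℝ) else 0)) / J)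
        atTop (𝓝 (((q : ℝ) ^ m)⁻¹)) := by
  have hq0 : 0 < q := by omega
  set μ := volume.restrict (Set.Ico (0 : ℝ) 1) with hμ
  set A : ℕ → Set ℝ := fun j => {x | ∀ i : Fin m, qdigit q x (j * m + r + (i : ℕ)) = d i}
    with hA
  set X : ℕ → ℝ → ℝ := fun j => (A j).indicator fun _ => (1 : ℝ) with hX
  have hAmeas : ∀ j, MeasurableSet (A j) := fun j => measurableSet_block q m d _
  have hAvol : ∀ j, μ (A j) = ENNReal.ofReal (((q : ℝ) ^ m)⁻¹) := fun j =>
    meas_block hq0 hm d hd _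
  have hint : Integrable (X 0) μ := (integrable_const (1 : ℝ)).indicator (hAmeas 0)
  have hindep : Pairwise (Function.onFun (fun f g => IndepFun f g μ) X) := by
    intro j k hjk
    apply indepFun_indicator_of_indepSet
    rw [indepSet_iff_measure_inter_eq_mul (hAmeas j) (hAmeas k) μ]
    rw [hAvol, hAvol]
    exact meas_block_inter hq0 hm d hd hjk
  have hident : ∀ j, IdentDistrib (X j) (X 0) μ μ := fun j =>
    identDistrib_indicator (hAmeas j) (hAmeas 0) (by rw [hAvol, hAvol])
  have hmean : (∫ x, X 0 x ∂μ) = ((q : ℝ) ^ m)⁻¹ := by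
    rw [hX]
    simp only []
    rw [integral_indicator_const (1 : ℝ) (hAmeas 0), measureReal_def, hAvol, smul_eq_mul, mul_one,
      ENNReal.toReal_ofReal (by positivity)]
  have := strong_law_ae_real X hint hindep hident
  rw [hmean] at this
  filter_upwards [this] with x hx
  apply hx.congr
  intro J
  congr 1
  apply Finset.sum_congr rfl
  intro j _
  rw [hX]
  simp only [Set.indicator_apply]
  by_cases h : ∀ i : Fin m, qdigit q x (j * m + r + (i : ℕ)) = d i <;>
    simp [hA, h, Set.mem_setOf_eq]

/-- `x` is normal to base `q`: every word `d` of length `m ≥ 1` over `{0, …, q-1}` occurs in the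
base-`q` digit sequence of `x` with frequency `q^{-m}`. -/
def IsNormal (q : ℕ) (x : ℝ) : Prop :=
  ∀ m : ℕ, 0 < m → ∀ d : Fin m → ℕ, (∀ i, d i < q) →
    Tendsto
      (fun N : ℕ =>
        (((Finset.range N).filter fun n =>
          ∀ i : Fin m, qdigit q x (n + (i : ℕ)) = d i).card : ℝ) / N)
      atTop (𝓝 (((q : ℝ) ^ m)⁻¹))

/-- **Borel's theorem**: Lebesgue-almost every `x ∈ [0,1)` is normal to every base `q ≥ 2`. -/
theorem borel_normal_numbers :
    ∀ᵐ x ∂(volume.restrict (Set.Ico (0 : ℝ) 1)),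
      ∀ q : ℕ, 2 ≤ q → IsNormal q x := by
  set μ := volume.restrict (Set.Ico (0 : ℝ) 1) with hμ
  rw [ae_all_iff]
  intro q
  by_cases hq : 2 ≤ q
  swap
  · exact ae_of_all _ fun x h => absurd h hq
  suffices H : ∀ (m : ℕ) (d : Fin m → ℕ), ∀ᵐ x ∂μ, 0 < m → (∀ i, d i < q) →
      Tendsto
        (fun N : ℕ =>
          (((Finset.range N).filter fun n =>
            ∀ i : Fin m, qdigit q x (n + (i : ℕ)) = d i).card : ℝ) / N)
        atTop (𝓝 (((q : ℝ) ^ m)⁻¹)) by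
    have H2 : ∀ᵐ x ∂μ, ∀ (m : ℕ) (d : Fin m → ℕ), 0 < m → (∀ i, d i < q) →
        Tendsto
          (fun N : ℕ =>
            (((Finset.range N).filter fun n =>
              ∀ i : Fin m, qdigit q x (n + (i : ℕ)) = d i).card : ℝ) / N)
          atTop (𝓝 (((q : ℝ) ^ m)⁻¹)) := by
      rw [ae_all_iff]
      intro m
      rw [ae_all_iff]
      intro d
      exact H m d
    filter_upwards [H2] with x hx
    intro _ m hm d hd
    exact hx m d hm hd
  intro m d
  by_cases hm : 0 < m
  swap
  · exact ae_of_all _ fun x h => absurd h hm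
  by_cases hd : ∀ i, d i < q
  swap
  · exact ae_of_all _ fun x _ h => absurd h hd
  have hres : ∀ᵐ x ∂μ, ∀ r, r < m →
      Tendsto (fun J : ℕ =>
          (∑ j ∈ Finset.range J,
            (if ∀ i : Fin m, qdigit q x (j * m + r + (i : ℕ)) = d i then (1 : ℝ) else 0)) / J)
        atTop (𝓝 (((q : ℝ) ^ m)⁻¹)) := by
    rw [ae_all_iff]
    intro r
    by_cases hr : r < m
    · filter_upwards [slln_residue hq hm d hd r] with x hx _
      exact hx
    · exact ae_of_all _ fun x hr' => absurd hr' hr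
  filter_upwards [hres] with x hx
  intro _ _
  have hcomb := freq_combine hm
    (fun n => if ∀ i : Fin m, qdigit q x (n + (i : ℕ)) = d i then (1 : ℝ) else 0)
    (fun n => by by_cases h : ∀ i : Fin m, qdigit q x (n + (i : ℕ)) = d i <;> simp [h])
    (fun n => by by_cases h : ∀ i : Fin m, qdigit q x (n + (i : ℕ)) = d i <;> simp [h])
    (((q : ℝ) ^ m)⁻¹)
    (fun r hr => hx r hr)
  apply hcomb.congr
  intro N
  congr 1
  rw [Finset.card_filter]
  push_cast
  apply Finset.sum_congr rfl
  intro n _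
  by_cases h : ∀ i : Fin m, qdigit q x (n + (i : ℕ)) = d i <;> simp [h]
end

section
/- For an integer q ≥ 2, a real number x ∈ [0,1) is normal to base q if and only if the sequence (q^n x)_{n≥0} is uniformly distributed modulo 1 (Wall's theorem). -/
open Filter MeasureTheory Topology
open scoped Classical

/-- A real sequence `u` is uniformly distributed mod 1 if for all `0 ≤ a < b ≤ 1` the fractional
parts `{u n}` fall in `[a, b)` with asymptotic frequency `b - a`. -/
def UnifDistMod1 (u : ℕ → ℝ) : Prop :=
  ∀ a b : ℝ, 0 ≤ a → a < b → b ≤ 1 →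
    Tendsto
      (fun N : ℕ =>
        (((Finset.range N).filter fun n => Int.fract (u n) ∈ Set.Ico a b).card : ℝ) / N)
      atTop (𝓝 (b - a))

/-! The first `m` base-`q` digits of `y ∈ [0, 1)` are the base-`q` digits of `⌊y q^m⌋`, so they
spell a given word exactly when `y` lies in the corresponding `q`-adic interval of length `q^{-m}`;
applied to `{q^n x}`, whose digits are those of `x` shifted by `n`, this makes normality the
statement that every `q`-adic interval gets its fair share of the sequence `{q^n x}`. An arbitrary
interval `[0, b)` is squeezed between unions of `q`-adic intervals of arbitrarily fine mesh, and
`[a, b) = [0, b) \ [0, a)`, so this is also equivalent to uniform distribution mod 1. -/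

open Finset

noncomputable def relFreq (t : ℕ → ℝ) (s : Set ℝ) (N : ℕ) : ℝ :=
  (#{n ∈ range N | t n ∈ s} : ℝ) / N

noncomputable def qadicInterval (q m c : ℕ) : Set ℝ :=
  Set.Ico (c / (q : ℝ) ^ m) ((c + 1) / (q : ℝ) ^ m)

section relFreq

variable {t : ℕ → ℝ} {s s' : Set ℝ} {N : ℕ}

lemma relFreq_mono (h : s ⊆ s') : relFreq t s N ≤ relFreq t s' N := by
  unfold relFreq
  gcongr

lemma relFreq_union (h : Disjoint s s') :
    relFreq t (s ∪ s') N = relFreq t s N + relFreq t s' N := by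
  unfold relFreq
  rw [← add_div, ← Nat.cast_add, ← card_union_of_disjoint]
  · congr 3
    ext n
    simp [and_or_left]
  · exact disjoint_filter.2 fun n _ hs hs' => h.ne_of_mem hs hs' rfl

lemma relFreq_eq_zero (h : ∀ n, t n ∉ s) : relFreq t s N = 0 := by
  simp [relFreq, h]

lemma relFreq_Ico {a b : ℝ} (hab : a ≤ b) :
    relFreq t (Set.Ico a b) N = relFreq t (Set.Iio b) N - relFreq t (Set.Iio a) N := by
  rw [← Set.Iio_union_Ico_eq_Iio hab,
    relFreq_union ((Set.Iio_disjoint_Ici le_rfl).mono_right Set.Ico_subset_Ici_self)]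
  ring

end relFreq

lemma unifDistMod1_iff_tendsto_relFreq (u : ℕ → ℝ) :
    UnifDistMod1 u ↔ ∀ a b : ℝ, 0 ≤ a → a < b → b ≤ 1 →
      Tendsto (relFreq (fun n => Int.fract (u n)) (Set.Ico a b)) atTop (𝓝 (b - a)) := by
  unfold UnifDistMod1 relFreq
  congr! 9 with a b - - - N
  simp

section digits

variable {q : ℕ}

lemma qdigit_eq_floor_mod (y : ℝ) (i : ℕ) :
    qdigit q y i = ⌊y * (q : ℝ) ^ (i + 1)⌋₊ % q := by
  rw [qdigit, Int.floor_toNat]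

lemma qdigit_add {x : ℝ} (hx : 0 ≤ x) (n i : ℕ) :
    qdigit q x (n + i) = qdigit q (Int.fract ((q : ℝ) ^ n * x)) i := by
  have hqn : 0 ≤ (q : ℝ) ^ n * x := by positivity
  have hsplit : x * (q : ℝ) ^ (n + i + 1) =
      Int.fract ((q : ℝ) ^ n * x) * (q : ℝ) ^ (i + 1) + (⌊(q : ℝ) ^ n * x⌋₊ * q ^ i * q : ℕ) := by
    rw [← Int.self_sub_floor, ← natCast_floor_eq_intCast_floor hqn]
    push_cast
    ring
  rw [qdigit_eq_floor_mod, qdigit_eq_floor_mod, hsplit,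
    Nat.floor_add_natCast (by positivity), Nat.add_mul_mod_self_right]

lemma qdigit_eq_floor_div_mod (y : ℝ) {m i : ℕ} (hi : i < m) :
    qdigit q y i = ⌊y * (q : ℝ) ^ m⌋₊ / q ^ (m - (i + 1)) % q := by
  rw [qdigit_eq_floor_mod, ← Nat.floor_div_natCast]
  congr 2
  rcases q.eq_zero_or_pos with rfl | hq
  · simp [zero_pow (Nat.succ_ne_zero i), zero_pow (by omega : m ≠ 0)]
  rw [Nat.cast_pow, eq_div_iff (by positivity), mul_assoc, ← pow_add,
    Nat.add_sub_of_le (by omega)]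

lemma floor_mul_pow_lt {y : ℝ} (hq : 0 < q) (hy : y < 1) (m : ℕ) :
    ⌊y * (q : ℝ) ^ m⌋₊ < q ^ m := by
  rw [Nat.floor_lt' (by positivity), Nat.cast_pow]
  exact mul_lt_of_lt_one_left (by positivity) hy

/-- Words are read most significant digit first, whereas `finFunctionFinEquiv` puts the least
significant digit first; hence the `Fin.rev`. -/
lemma forall_qdigit_eq_iff {y : ℝ} (hq : 0 < q) (hy : y < 1) {m : ℕ}
    (d : Fin m → Fin q) :
    (∀ i : Fin m, qdigit q y i = d i) ↔
      ⌊y * (q : ℝ) ^ m⌋₊ = finFunctionFinEquiv (fun i => d i.rev) := by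
  set k : Fin (q ^ m) := ⟨_, floor_mul_pow_lt hq hy m⟩
  change _ ↔ (k : ℕ) = _
  rw [Fin.val_inj, ← Equiv.symm_apply_eq, funext_iff]
  refine Fin.revPerm.forall_congr_right.symm.trans (forall_congr' fun i => ?_)
  rw [Fin.revPerm_apply, qdigit_eq_floor_div_mod y i.rev.2, Fin.ext_iff,
    finFunctionFinEquiv_symm_apply_val, Fin.val_rev,
    show m - (m - (i + 1) + 1) = i by omega]

lemma floor_mul_pow_eq_iff {y : ℝ} (hq : 0 < q) (hy : 0 ≤ y) (m c : ℕ) :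
    ⌊y * (q : ℝ) ^ m⌋₊ = c ↔ y ∈ qadicInterval q m c := by
  have hqm : (0 : ℝ) < (q : ℝ) ^ m := by positivity
  rw [Nat.floor_eq_iff (by positivity), qadicInterval, Set.mem_Ico, div_le_iff₀ hqm,
    lt_div_iff₀ hqm]

lemma forall_qdigit_add_eq_iff {x : ℝ} (hq : 0 < q) (hx : 0 ≤ x) (n : ℕ) {m : ℕ}
    (d : Fin m → Fin q) :
    (∀ i : Fin m, qdigit q x (n + i) = d i) ↔
      Int.fract ((q : ℝ) ^ n * x) ∈ qadicInterval q m (finFunctionFinEquiv fun i => d i.rev) := by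
  simp_rw [qdigit_add hx]
  rw [forall_qdigit_eq_iff hq (Int.fract_lt_one _),
    floor_mul_pow_eq_iff hq (Int.fract_nonneg _)]

end digits

lemma isNormal_iff_tendsto_relFreq_qadicInterval {q : ℕ} (hq : 0 < q) {x : ℝ} (hx : 0 ≤ x) :
    IsNormal q x ↔ ∀ m, 0 < m → ∀ c < q ^ m,
      Tendsto (relFreq (fun n => Int.fract ((q : ℝ) ^ n * x)) (qadicInterval q m c)) atTop
        (𝓝 ((q : ℝ) ^ m)⁻¹) := by
  have hfreq : ∀ {m : ℕ} (d : Fin m → Fin q) (N : ℕ),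
      (#{n ∈ range N | ∀ i : Fin m, qdigit q x (n + i) = d i} : ℝ) / N =
        relFreq (fun n => Int.fract ((q : ℝ) ^ n * x))
          (qadicInterval q m (finFunctionFinEquiv fun i => d i.rev)) N := by
    intro m d N
    unfold relFreq
    congr 3
    ext n
    simp only [mem_filter, forall_qdigit_add_eq_iff hq hx]
  constructor
  · intro hnormal m hm c hc
    simpa only [hfreq, Fin.rev_rev, Equiv.apply_symm_apply] using
      hnormal m hm (fun i => finFunctionFinEquiv.symm ⟨c, hc⟩ i.rev) fun i => Fin.is_lt _
  · intro hqadic m hm d hd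
    simpa only [hfreq fun i => ⟨d i, hd i⟩] using hqadic m hm _ (Fin.is_lt _)

lemma tendsto_of_monotone_of_approx {F : ℝ → ℕ → ℝ} (hF : ∀ N, Monotone fun r => F r N) {b : ℝ}
    (happrox : ∀ ε > 0, ∃ r r', r ≤ b ∧ b ≤ r' ∧ r' - r < ε ∧
      Tendsto (F r) atTop (𝓝 r) ∧ Tendsto (F r') atTop (𝓝 r')) :
    Tendsto (F b) atTop (𝓝 b) := by
  refine tendsto_order.2 ⟨fun l hl => ?_, fun l hl => ?_⟩
  · obtain ⟨r, r', hrb, hbr', hrr', hr, -⟩ := happrox (b - l) (by linarith)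
    filter_upwards [(tendsto_order.1 hr).1 l (by linarith)] with N hN
    exact hN.trans_le (hF N hrb)
  · obtain ⟨r, r', hrb, hbr', hrr', -, hr'⟩ := happrox (l - b) (by linarith)
    filter_upwards [(tendsto_order.1 hr').2 l (by linarith)] with N hN
    exact (hF N hbr').trans_lt hN

lemma exists_inv_pow_lt {q : ℝ} (hq : 1 < q) {ε : ℝ} (hε : 0 < ε) :
    ∃ m, 0 < m ∧ (q ^ m)⁻¹ < ε := by
  obtain ⟨m, hm⟩ := exists_pow_lt_of_lt_one hε (inv_lt_one_of_one_lt₀ hq)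
  refine ⟨m + 1, m.succ_pos, lt_of_le_of_lt ?_ hm⟩
  rw [← inv_pow]
  exact pow_le_pow_of_le_one (by positivity) (inv_le_one_of_one_le₀ hq.le) m.le_succ

section qadic

variable {q : ℕ} {t : ℕ → ℝ}

lemma tendsto_relFreq_Iio_div_pow (ht : ∀ n, 0 ≤ t n) {m : ℕ}
    (h : ∀ c < q ^ m, Tendsto (relFreq t (qadicInterval q m c)) atTop (𝓝 ((q : ℝ) ^ m)⁻¹)) :
    ∀ K ≤ q ^ m, Tendsto (relFreq t (Set.Iio (K / (q : ℝ) ^ m))) atTop (𝓝 (K / (q : ℝ) ^ m)) := by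
  intro K hK
  induction K with
  | zero =>
    simp only [Nat.cast_zero, zero_div]
    exact tendsto_const_nhds.congr fun N =>
      (relFreq_eq_zero fun n => (ht n).not_gt).symm
  | succ K ih =>
    have hunion : Set.Iio (((K + 1 : ℕ) : ℝ) / (q : ℝ) ^ m) =
        Set.Iio (K / (q : ℝ) ^ m) ∪ qadicInterval q m K := by
      rw [qadicInterval, Set.Iio_union_Ico_eq_Iio (by gcongr; linarith), Nat.cast_succ]
    have hdisj : Disjoint (Set.Iio (K / (q : ℝ) ^ m)) (qadicInterval q m K) :=
      (Set.Iio_disjoint_Ici le_rfl).mono_right Set.Ico_subset_Ici_self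
    rw [hunion]
    convert (ih (by omega)).add (h K (by omega)) using 1
    · exact funext fun N => relFreq_union hdisj
    · rw [Nat.cast_succ, add_div, div_eq_mul_inv 1, one_mul]

lemma tendsto_relFreq_Iio (hq : 1 < q) (ht : ∀ n, 0 ≤ t n)
    (h : ∀ m, 0 < m → ∀ c < q ^ m,
      Tendsto (relFreq t (qadicInterval q m c)) atTop (𝓝 ((q : ℝ) ^ m)⁻¹))
    {b : ℝ} (hb0 : 0 ≤ b) (hb1 : b ≤ 1) :
    Tendsto (relFreq t (Set.Iio b)) atTop (𝓝 b) := by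
  refine tendsto_of_monotone_of_approx (F := fun r => relFreq t (Set.Iio r))
    (fun N r r' hrr' => relFreq_mono (Set.Iio_subset_Iio hrr')) fun ε hε => ?_
  obtain ⟨m, hm, hmε⟩ := exists_inv_pow_lt (Nat.one_lt_cast.2 hq) hε
  have hqm : (0 : ℝ) < (q : ℝ) ^ m := by positivity
  have hbq : 0 ≤ b * (q : ℝ) ^ m := by positivity
  have hbq' : b * (q : ℝ) ^ m ≤ ((q ^ m : ℕ) : ℝ) := by
    rw [Nat.cast_pow]
    exact mul_le_of_le_one_left hqm.le hb1
  set K := b * (q : ℝ) ^ m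
  refine ⟨⌊K⌋₊ / (q : ℝ) ^ m, ⌈K⌉₊ / (q : ℝ) ^ m, ?_, ?_, ?_, ?_, ?_⟩
  · exact (div_le_iff₀ hqm).2 (Nat.floor_le hbq)
  · exact (le_div_iff₀ hqm).2 (Nat.le_ceil _)
  · calc (⌈K⌉₊ : ℝ) / (q : ℝ) ^ m - ⌊K⌋₊ / (q : ℝ) ^ m
        ≤ ((⌊K⌋₊ + 1 : ℕ) - ⌊K⌋₊) / (q : ℝ) ^ m := by
          rw [sub_div]
          gcongr
          exact Nat.ceil_le_floor_add_one _
      _ = ((q : ℝ) ^ m)⁻¹ := by push_cast; ring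
      _ < ε := hmε
  · exact tendsto_relFreq_Iio_div_pow ht (h m hm) _ (Nat.floor_le_of_le hbq')
  · exact tendsto_relFreq_Iio_div_pow ht (h m hm) _ (Nat.ceil_le.2 hbq')

end qadic

lemma unifDistMod1_iff_tendsto_relFreq_qadicInterval {q : ℕ} (hq : 1 < q) (u : ℕ → ℝ) :
    UnifDistMod1 u ↔ ∀ m, 0 < m → ∀ c < q ^ m,
      Tendsto (relFreq (fun n => Int.fract (u n)) (qadicInterval q m c)) atTop
        (𝓝 ((q : ℝ) ^ m)⁻¹) := by
  rw [unifDistMod1_iff_tendsto_relFreq]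
  constructor
  · intro hu m _ c hc
    have hqm : (0 : ℝ) < (q : ℝ) ^ m := by positivity
    have hc1 : ((c + 1 : ℕ) : ℝ) ≤ ((q ^ m : ℕ) : ℝ) := Nat.cast_le.2 hc
    push_cast at hc1
    have hcu := hu (c / (q : ℝ) ^ m) ((c + 1) / (q : ℝ) ^ m) (by positivity) (by gcongr; linarith)
      ((div_le_one hqm).2 hc1)
    rwa [show ((c : ℝ) + 1) / (q : ℝ) ^ m - c / (q : ℝ) ^ m = ((q : ℝ) ^ m)⁻¹ by ring] at hcu
  · intro h a b ha hab hb
    have hIio := fun {r : ℝ} (hr0 : 0 ≤ r) (hr1 : r ≤ 1) =>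
      tendsto_relFreq_Iio hq (fun n => Int.fract_nonneg (u n)) h hr0 hr1
    exact ((hIio (ha.trans hab.le) hb).sub (hIio ha (hab.le.trans hb))).congr fun N =>
      (relFreq_Ico hab.le).symm

/-- **Wall's theorem**: for an integer `q ≥ 2`, a real number `x ∈ [0,1)` is normal to base `q`
iff the sequence `(q^n x)_{n ≥ 0}` is uniformly distributed modulo 1. -/
theorem wall_normal_iff_unifDistMod1 (q : ℕ) (hq : 2 ≤ q) (x : ℝ)
    (hx : x ∈ Set.Ico (0 : ℝ) 1) :
    IsNormal q x ↔ UnifDistMod1 (fun n : ℕ => (q : ℝ) ^ n * x) :=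
  (isNormal_iff_tendsto_relFreq_qadicInterval (by omega) hx.1).trans
    (unifDistMod1_iff_tendsto_relFreq_qadicInterval hq _).symm
end

section
/- Let μ be a probability measure on a measurable space, let (X_n)_{n≥1} be a uniformly bounded sequence of complex-valued random variables, and set S_N = (1/N) Σ_{n=1}^N X_n. If Σ_{N≥1} (1/N) ∫ |S_N|² dμ < ∞, then S_N → 0 μ-almost everywhere (Davenport–Erdős–LeVeque). -/
/-!
If `‖S N₀‖ ≥ ε`, the partial sums `N • S N` move by at most `C` per step, so `‖S N‖ ≥ ε / 2` on the
whole block `N₀ ≤ N ≤ (1 + c) N₀` with `c = ε / (2C + ε)`. That block contributes at least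
`c ε² / 8` to `∑ (1/N) ‖S N‖²`, independently of `N₀`, which summability rules out for large `N₀`.
Summability of the integrals gives, by monotone convergence, summability of `∑ (1/N) |S N x|²` for
almost every `x`.
-/

open Filter MeasureTheory Topology Finset

lemma Summable.eventually_sum_Icc_lt {f : ℕ → ℝ} (hf : Summable f) {δ : ℝ} (hδ : 0 < δ) :
    ∀ᶠ a in atTop, ∀ b, ∑ n ∈ Icc a b, f n < δ := by
  obtain ⟨t, ht⟩ := hf.vanishing (Iio_mem_nhds hδ)
  filter_upwards [eventually_gt_atTop (t.sup id)] with a ha b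
  refine ht _ (disjoint_left.2 fun n hn hnt => ?_)
  have : n ≤ t.sup id := le_sup (f := id) hnt
  have : a ≤ n := (mem_Icc.1 hn).1
  omega

lemma norm_sum_Icc_sub_sum_Icc_le {F : Type*} [SeminormedAddCommGroup F] {y : ℕ → F} {C : ℝ}
    (hy : ∀ n, ‖y n‖ ≤ C) {M N : ℕ} (hMN : M ≤ N) :
    ‖∑ n ∈ Icc 1 N, y n - ∑ n ∈ Icc 1 M, y n‖ ≤ (N - M : ℕ) * C := by
  have hIoc (K : ℕ) : Icc 1 K = Ioc 0 K := by simpa using Icc_add_one_left_eq_Ioc 0 K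
  rw [hIoc, hIoc, ← sum_Ioc_consecutive y (Nat.zero_le M) hMN, add_sub_cancel_left]
  calc ‖∑ n ∈ Ioc M N, y n‖ ≤ ∑ n ∈ Ioc M N, C := norm_sum_le_of_le _ fun n _ => hy n
    _ = (N - M : ℕ) * C := by simp

section Cesaro

variable {𝕜 F : Type*} [RCLike 𝕜] [NormedAddCommGroup F] [NormedSpace 𝕜 F]
  {y s : ℕ → F} {C : ℝ}

lemma norm_inv_natCast_smul (N : ℕ) (v : F) : ‖(N : 𝕜)⁻¹ • v‖ = (N : ℝ)⁻¹ * ‖v‖ := by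
  rw [norm_smul, norm_inv, RCLike.norm_natCast]

lemma norm_cesaro_le (hy : ∀ n, ‖y n‖ ≤ C) (N : ℕ) : ‖(N : 𝕜)⁻¹ • ∑ n ∈ Icc 1 N, y n‖ ≤ C := by
  have hC : 0 ≤ C := (norm_nonneg _).trans (hy 0)
  rw [norm_inv_natCast_smul]
  rcases N.eq_zero_or_pos with rfl | hN
  · simpa using hC
  rw [inv_mul_le_iff₀ (by exact_mod_cast hN)]
  calc ‖∑ n ∈ Icc 1 N, y n‖ ≤ ∑ n ∈ Icc 1 N, C := norm_sum_le_of_le _ fun n _ => hy n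
    _ = N * C := by simp

variable (hs : ∀ N, s N = (N : 𝕜)⁻¹ • ∑ n ∈ Icc 1 N, y n)
include hs

lemma norm_sum_Icc_eq_mul_norm_cesaro (N : ℕ) : ‖∑ n ∈ Icc 1 N, y n‖ = N * ‖s N‖ := by
  rcases N.eq_zero_or_pos with rfl | hN
  · simp
  rw [hs, norm_inv_natCast_smul, ← mul_assoc, mul_inv_cancel₀ (by positivity), one_mul]

lemma ne_zero_of_le_norm_cesaro {ε : ℝ} (hε : 0 < ε) {N₀ : ℕ} (h₀ : ε ≤ ‖s N₀‖) : N₀ ≠ 0 := by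
  rintro rfl
  exact hε.not_ge (by simpa [hs] using h₀)

lemma half_le_norm_cesaro (hy : ∀ n, ‖y n‖ ≤ C) {ε : ℝ} (hε : 0 < ε) {N₀ N : ℕ}
    (h₀ : ε ≤ ‖s N₀‖) (hN : N₀ ≤ N) (hclose : (N - N₀ : ℕ) * (2 * C + ε) ≤ N₀ * ε) :
    ε / 2 ≤ ‖s N‖ := by
  have hNpos : (0 : ℝ) < N := by
    exact_mod_cast (Nat.pos_of_ne_zero (ne_zero_of_le_norm_cesaro hs hε h₀)).trans_le hN
  have hdiff := norm_sum_Icc_sub_sum_Icc_le hy hN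
  have hrev := norm_sub_norm_le (∑ n ∈ Icc 1 N₀, y n) (∑ n ∈ Icc 1 N, y n)
  rw [norm_sub_rev, norm_sum_Icc_eq_mul_norm_cesaro hs, norm_sum_Icc_eq_mul_norm_cesaro hs] at hrev
  have hcast : (N : ℝ) = N₀ + (N - N₀ : ℕ) := by push_cast [hN]; ring
  refine le_of_mul_le_mul_left ?_ hNpos
  nlinarith [Nat.cast_nonneg (α := ℝ) (N - N₀)]

lemma le_sum_Icc_inv_mul_norm_cesaro_sq (hy : ∀ n, ‖y n‖ ≤ C) {ε : ℝ} (hε : 0 < ε) {N₀ : ℕ}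
    (h₀ : ε ≤ ‖s N₀‖) :
    ε ^ 3 / (8 * (2 * C + ε)) ≤
      ∑ N ∈ Icc N₀ (N₀ + ⌊N₀ * ε / (2 * C + ε)⌋₊), (N : ℝ)⁻¹ * ‖s N‖ ^ 2 := by
  have hC : 0 ≤ C := (norm_nonneg _).trans (hy 0)
  have hN₀ : (0 : ℝ) < N₀ := by
    exact_mod_cast Nat.pos_of_ne_zero (ne_zero_of_le_norm_cesaro hs hε h₀)
  have hD : 0 < 2 * C + ε := by positivity
  set k := ⌊N₀ * ε / (2 * C + ε)⌋₊
  have hk_le : (k : ℝ) * (2 * C + ε) ≤ N₀ * ε := (le_div_iff₀ hD).1 (Nat.floor_le (by positivity))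
  have hk_le' : (k : ℝ) ≤ N₀ := by nlinarith
  have hterm : ∀ N ∈ Icc N₀ (N₀ + k), ε ^ 2 / (8 * N₀) ≤ (N : ℝ)⁻¹ * ‖s N‖ ^ 2 := by
    intro N hN
    obtain ⟨hN₀N, hNk⟩ := mem_Icc.1 hN
    have hNk' : ((N - N₀ : ℕ) : ℝ) ≤ k := by exact_mod_cast Nat.sub_le_iff_le_add'.2 hNk
    have hhalf := half_le_norm_cesaro hs hy hε h₀ hN₀N (by nlinarith)
    have hN : (N : ℝ) ≤ 2 * N₀ := by
      have : (N : ℝ) ≤ N₀ + k := by exact_mod_cast hNk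
      linarith
    have hNpos : (0 : ℝ) < N := hN₀.trans_le (by exact_mod_cast hN₀N)
    have hsq : ε ^ 2 ≤ 4 * ‖s N‖ ^ 2 := by nlinarith
    rw [inv_mul_eq_div, div_le_div_iff₀ (by positivity) hNpos]
    nlinarith [mul_le_mul hsq hN hNpos.le (by positivity)]
  calc ε ^ 3 / (8 * (2 * C + ε)) = N₀ * ε / (2 * C + ε) * (ε ^ 2 / (8 * N₀)) := by
        field_simp
    _ ≤ (k + 1) * (ε ^ 2 / (8 * N₀)) := by gcongr; exact (Nat.lt_floor_add_one _).le
    _ = #(Icc N₀ (N₀ + k)) • (ε ^ 2 / (8 * N₀)) := by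
        rw [Nat.card_Icc, nsmul_eq_mul, show N₀ + k + 1 - N₀ = k + 1 by omega]
        push_cast; rfl
    _ ≤ _ := card_nsmul_le_sum _ _ _ hterm

theorem tendsto_cesaro_zero_of_summable (hy : ∀ n, ‖y n‖ ≤ C)
    (h : Summable fun N : ℕ => (N : ℝ)⁻¹ * ‖s N‖ ^ 2) : Tendsto s atTop (𝓝 0) := by
  have hC : 0 ≤ C := (norm_nonneg _).trans (hy 0)
  rw [NormedAddGroup.tendsto_nhds_zero]
  intro ε hε
  filter_upwards [h.eventually_sum_Icc_lt (by positivity : 0 < ε ^ 3 / (8 * (2 * C + ε)))]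
    with N₀ hN₀
  by_contra! h₀
  exact (hN₀ _).not_ge (le_sum_Icc_inv_mul_norm_cesaro_sq hs hy hε h₀)

end Cesaro

lemma ae_summable_of_summable_integral {α ι : Type*} [MeasurableSpace α] {μ : Measure α}
    [Countable ι] {f : ι → α → ℝ} (hf : ∀ i, Integrable (f i) μ) (hf_nonneg : ∀ i, 0 ≤ᵐ[μ] f i)
    (hsum : Summable fun i => ∫ a, f i a ∂μ) : ∀ᵐ a ∂μ, Summable fun i => f i a := by
  have hmeas i : AEMeasurable (fun a => ENNReal.ofReal (f i a)) μ :=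
    (hf i).aemeasurable.ennreal_ofReal
  have hfin : ∫⁻ a, ∑' i, ENNReal.ofReal (f i a) ∂μ ≠ ⊤ := by
    rw [lintegral_tsum hmeas]
    simp_rw [← ofReal_integral_eq_lintegral_ofReal (hf _) (hf_nonneg _)]
    rw [← ENNReal.ofReal_tsum_of_nonneg (fun i => integral_nonneg_of_ae (hf_nonneg i)) hsum]
    exact ENNReal.ofReal_ne_top
  filter_upwards [ae_lt_top' (AEMeasurable.tsum hmeas) hfin, ae_all_iff.2 hf_nonneg]
    with a ha hnonneg
  simpa [ENNReal.toReal_ofReal (hnonneg _)] using ENNReal.summable_toReal ha.ne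

/-- **Davenport–Erdős–LeVeque**: let `μ` be a probability measure, `(X n)_{n ≥ 1}` a uniformly
bounded sequence of complex random variables, and `S N = (1/N) ∑_{n=1}^N X n`.  If
`∑_{N ≥ 1} (1/N) ∫ |S N|² dμ < ∞`, then `S N → 0` `μ`-almost everywhere. -/
theorem davenport_erdos_leveque {E : Type*} [MeasurableSpace E]
    (μ : Measure E) [IsProbabilityMeasure μ]
    (X : ℕ → E → ℂ) (hmeas : ∀ n, Measurable (X n))
    (C : ℝ) (hbd : ∀ n x, ‖X n x‖ ≤ C)
    (S : ℕ → E → ℂ)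
    (hS : ∀ N x, S N x = (N : ℂ)⁻¹ * ∑ n ∈ Finset.Icc 1 N, X n x)
    (hsum : Summable fun N : ℕ => (N : ℝ)⁻¹ * ∫ x, ‖S N x‖ ^ 2 ∂μ) :
    ∀ᵐ x ∂μ, Tendsto (fun N : ℕ => S N x) atTop (𝓝 0) := by
  have hS_meas N : Measurable (S N) := by
    rw [funext (hS N)]
    fun_prop
  have hS_bd N x : ‖S N x‖ ≤ C := by
    rw [hS]
    exact norm_cesaro_le (𝕜 := ℂ) (fun n => hbd n x) N
  have hint (N : ℕ) : Integrable (fun x => (N : ℝ)⁻¹ * ‖S N x‖ ^ 2) μ := by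
    refine .const_mul (.of_bound (by fun_prop) (C ^ 2) (ae_of_all _ fun x => ?_)) _
    rw [norm_pow, norm_norm]
    exact pow_le_pow_left₀ (norm_nonneg _) (hS_bd N x) 2
  filter_upwards [ae_summable_of_summable_integral hint
    (fun N => ae_of_all _ fun x => by positivity) (by simpa only [integral_const_mul] using hsum)]
    with x hx
  exact tendsto_cesaro_zero_of_summable (𝕜 := ℂ) (fun N => hS N x) (fun n => hbd n x) hx
end

section
/- For Lebesgue-almost every irrational x ∈ (0,1), the averages of its continued fraction partial quotients tend to infinity: lim_{n→∞} (1/n)(a_1(x) + ⋯ + a_n(x)) = +∞. -/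
open Filter MeasureTheory Topology
open scoped Classical

noncomputable def gaussMap (x : ℝ) : ℝ := Int.fract x⁻¹

/-- `cfa n x` is the partial quotient `a_{n+1}(x)` of the regular continued fraction expansion
of `x`, generated by the Gauss map: `a_1(x) = ⌊1/x⌋` and `a_{k+1}(x) = a_k (T x)`. -/
noncomputable def cfa : ℕ → ℝ → ℕ
  | 0, x => ⌊x⁻¹⌋₊
  | n + 1, x => cfa n (gaussMap x)

/-!
Fix `K ≥ 1`. The set of `x` whose expansion starts with `a_1, …, a_i` and whose `i`-th Gauss
iterate lies in an interval is the image of that interval under the Möbius map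
`t ↦ [0; a_1, …, a_i + t]`, of determinant `±1`. So the Lebesgue conditional probability that
`a_{i+1} ≥ K` given `a_1, …, a_i` is an explicit function of the convergent denominators, and it is
at least `1/K`. The increments `𝟙[a_{i+1} ≥ K] - P(a_{i+1} ≥ K | a_1, …, a_i)` are bounded and
pairwise orthogonal, so the second moment of their `n`-th partial sum is at most `n`; along
`n = m²` the averages then have summable second moments and tend to `0` a.e., and boundedness
interpolates between consecutive squares. Hence for a.e. `x` and every `K` the frequency of
`a_i ≥ K` is asymptotically at least `1/K`, and since `a ≥ ∑_{K ≤ M} 𝟙[a ≥ K]`, the averages of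
the `a_i` eventually exceed `∑_{K ≤ M} 1/K - 1`.
-/

def unitIrrationals : Set ℝ := {x | Irrational x} ∩ Set.Ioo 0 1

lemma mapsTo_gaussMap : Set.MapsTo gaussMap unitIrrationals unitIrrationals := by
  rintro x ⟨hx, -, -⟩
  have hT : Irrational (gaussMap x) := (irrational_inv_iff.2 hx).sub_intCast ⌊x⁻¹⌋
  exact ⟨hT, (Int.fract_nonneg _).lt_of_ne hT.ne_zero.symm, Int.fract_lt_one _⟩

lemma cfa_eq_floor_inv_iterate (n : ℕ) (x : ℝ) : cfa n x = ⌊(gaussMap^[n] x)⁻¹⌋₊ := by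
  induction n generalizing x with
  | zero => rfl
  | succ n ih => rw [Function.iterate_succ_apply, ← ih]; rfl

lemma le_cfa_iff {K n : ℕ} (hK : 0 < K) {x : ℝ} (hx : x ∈ unitIrrationals) :
    K ≤ cfa n x ↔ gaussMap^[n] x < (K : ℝ)⁻¹ := by
  obtain ⟨hirr, hpos, -⟩ := mapsTo_gaussMap.iterate n hx
  rw [cfa_eq_floor_inv_iterate, Nat.le_floor_iff (inv_nonneg.2 hpos.le),
    le_inv_comm₀ (by positivity) hpos]
  exact ⟨fun h => h.lt_of_ne fun h' => hirr ⟨(K : ℚ)⁻¹, by simp [h']⟩, le_of_lt⟩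

lemma one_le_cfa {x : ℝ} (hx : x ∈ unitIrrationals) (n : ℕ) : 1 ≤ cfa n x := by
  rw [le_cfa_iff one_pos hx, Nat.cast_one, inv_one]
  exact (mapsTo_gaussMap.iterate n hx).2.2

lemma measurable_gaussMap : Measurable gaussMap :=
  measurable_fract.comp measurable_inv

lemma measurable_cfa (n : ℕ) : Measurable (cfa n) := by
  induction n with
  | zero => exact measurable_inv.nat_floor
  | succ n ih => exact ih.comp measurable_gaussMap

lemma volume_setOf_irrational_compl : volume {x : ℝ | Irrational x}ᶜ = 0 := by
  have : {x : ℝ | Irrational x}ᶜ = Set.range ((↑) : ℚ → ℝ) := by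
    ext x; simp [Irrational]
  rw [this]
  exact (Set.countable_range _).measure_zero _

lemma restrict_Ioo_apply_eq_volume_inter_unitIrrationals (s : Set ℝ) :
    volume.restrict (Set.Ioo (0 : ℝ) 1) s = volume (s ∩ unitIrrationals) := by
  rw [Measure.restrict_apply' measurableSet_Ioo, unitIrrationals, Set.inter_comm {x | _},
    ← Set.inter_assoc, measure_inter_conull volume_setOf_irrational_compl]

/-- The continued fraction `[0; a₁, …, aₙ + t]` for `l = [a₁, …, aₙ]`. -/
noncomputable def cfWithTail : List ℕ → ℝ → ℝ
  | [], t => t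
  | a :: l, t => ((a : ℝ) + cfWithTail l t)⁻¹

/-- `cfMatrix [a₁, …, aₙ] = !![p_{n-1}, pₙ; q_{n-1}, qₙ]`, the matrix of convergents. -/
noncomputable def cfMatrix : List ℕ → Matrix (Fin 2) (Fin 2) ℝ
  | [] => 1
  | a :: l => !![0, 1; 1, (a : ℝ)] * cfMatrix l

lemma cfMatrix_cons (a : ℕ) (l : List ℕ) :
    cfMatrix (a :: l) = !![cfMatrix l 1 0, cfMatrix l 1 1;
      cfMatrix l 0 0 + a * cfMatrix l 1 0, cfMatrix l 0 1 + a * cfMatrix l 1 1] := by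
  ext i j; fin_cases i <;> fin_cases j <;> simp [cfMatrix, Matrix.mul_apply, Fin.sum_univ_two]

lemma cfMatrix_nonneg (l : List ℕ) (i j : Fin 2) : 0 ≤ cfMatrix l i j := by
  induction l generalizing i j with
  | nil => fin_cases i <;> fin_cases j <;> simp [cfMatrix]
  | cons a l ih =>
    rw [cfMatrix_cons]
    fin_cases i <;> fin_cases j <;> simp only [Fin.zero_eta, Fin.mk_one, Matrix.of_apply,
      Matrix.cons_val', Matrix.cons_val_zero, Matrix.cons_val_one, Matrix.cons_val_fin_one]
    all_goals first | exact ih _ _ | exact add_nonneg (ih _ _) (mul_nonneg a.cast_nonneg (ih _ _))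

lemma one_le_cfMatrix_one_one {l : List ℕ} (hl : ∀ a ∈ l, 0 < a) : 1 ≤ cfMatrix l 1 1 := by
  induction l with
  | nil => simp [cfMatrix]
  | cons a l ih =>
    have ha : (1 : ℝ) ≤ a := Nat.one_le_cast.2 (hl a List.mem_cons_self)
    rw [cfMatrix_cons]
    simp only [Matrix.of_apply, Matrix.cons_val', Matrix.cons_val_one, Matrix.cons_val_fin_one]
    nlinarith [ih fun b hb => hl b (List.mem_cons_of_mem _ hb), cfMatrix_nonneg l 0 1]

lemma det_cfMatrix (l : List ℕ) : (cfMatrix l).det = (-1) ^ l.length := by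
  induction l with
  | nil => simp [cfMatrix]
  | cons a l ih => rw [cfMatrix, Matrix.det_mul, Matrix.det_fin_two_of, ih, List.length_cons]; ring

lemma cfMatrix_denom_pos {l : List ℕ} (hl : ∀ a ∈ l, 0 < a) {t : ℝ} (ht : 0 ≤ t) :
    0 < cfMatrix l 1 0 * t + cfMatrix l 1 1 := by
  nlinarith [one_le_cfMatrix_one_one hl, cfMatrix_nonneg l 1 0]

lemma cfWithTail_nonneg (l : List ℕ) {t : ℝ} (ht : 0 ≤ t) : 0 ≤ cfWithTail l t := by
  induction l with
  | nil => exact ht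
  | cons a l ih => exact inv_nonneg.2 (add_nonneg a.cast_nonneg ih)

lemma cfWithTail_eq_div {l : List ℕ} (hl : ∀ a ∈ l, 0 < a) {t : ℝ} (ht : 0 ≤ t) :
    cfWithTail l t =
      (cfMatrix l 0 0 * t + cfMatrix l 0 1) / (cfMatrix l 1 0 * t + cfMatrix l 1 1) := by
  induction l with
  | nil => simp [cfWithTail, cfMatrix]
  | cons a l ih =>
    have hl' : ∀ b ∈ l, 0 < b := fun b hb => hl b (List.mem_cons_of_mem _ hb)
    have hd := cfMatrix_denom_pos hl' ht
    rw [cfWithTail, ih hl', cfMatrix_cons, add_div' _ _ _ hd.ne', inv_div]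
    simp only [Matrix.of_apply, Matrix.cons_val', Matrix.cons_val_zero, Matrix.cons_val_one,
      Matrix.cons_val_fin_one]
    ring

lemma abs_cfWithTail_sub {l : List ℕ} (hl : ∀ a ∈ l, 0 < a) {u v : ℝ} (hu : 0 ≤ u) (hv : 0 ≤ v) :
    |cfWithTail l u - cfWithTail l v| = |u - v| /
      ((cfMatrix l 1 0 * u + cfMatrix l 1 1) * (cfMatrix l 1 0 * v + cfMatrix l 1 1)) := by
  have hdu := cfMatrix_denom_pos hl hu
  have hdv := cfMatrix_denom_pos hl hv
  have hdet : |cfMatrix l 0 0 * cfMatrix l 1 1 - cfMatrix l 0 1 * cfMatrix l 1 0| = 1 := by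
    rw [← Matrix.det_fin_two, det_cfMatrix, abs_pow, abs_neg, abs_one, one_pow]
  rw [cfWithTail_eq_div hl hu, cfWithTail_eq_div hl hv, div_sub_div _ _ hdu.ne' hdv.ne', abs_div,
    abs_of_pos (mul_pos hdu hdv), ← one_mul |u - v|, ← hdet, ← abs_mul]
  congr 2
  ring

noncomputable def cfPrefix (n : ℕ) (x : ℝ) : List ℕ := List.ofFn fun i : Fin n => cfa i x

lemma cfPrefix_succ (n : ℕ) (x : ℝ) : cfPrefix (n + 1) x = cfa 0 x :: cfPrefix n (gaussMap x) :=
  List.ofFn_succ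

lemma length_cfPrefix (n : ℕ) (x : ℝ) : (cfPrefix n x).length = n :=
  List.length_ofFn

lemma take_cfPrefix {i n : ℕ} (h : i ≤ n) (x : ℝ) : (cfPrefix n x).take i = cfPrefix i x := by
  apply List.ext_getElem (by simp [length_cfPrefix, h])
  intro k hk _
  simp [cfPrefix]

lemma getD_cfPrefix {i n : ℕ} (h : i < n) (x : ℝ) : (cfPrefix n x).getD i 0 = cfa i x := by
  simp [cfPrefix, h]

lemma pos_of_mem_cfPrefix {x : ℝ} (hx : x ∈ unitIrrationals) {n a : ℕ} (ha : a ∈ cfPrefix n x) :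
    0 < a := by
  obtain ⟨i, rfl⟩ := List.mem_ofFn.1 ha
  exact one_le_cfa hx i

lemma measurable_comp_cfPrefix {β : Type*} [MeasurableSpace β] (G : List ℕ → β) (n : ℕ) :
    Measurable fun x => G (cfPrefix n x) :=
  (measurable_of_countable fun f : Fin n → ℕ => G (List.ofFn f)).comp
    (measurable_pi_lambda _ fun i => measurable_cfa i)

def cfCylinder (l : List ℕ) (E : Set ℝ) : Set ℝ :=
  {x ∈ unitIrrationals | cfPrefix l.length x = l ∧ gaussMap^[l.length] x ∈ E}

lemma natCast_cfa_zero_add_gaussMap {x : ℝ} (hx : 0 < x) : (cfa 0 x : ℝ) + gaussMap x = x⁻¹ := by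
  rw [gaussMap, ← Int.self_sub_floor, ← Int.natCast_floor_eq_floor (inv_nonneg.2 hx.le)]
  simp [cfa]

lemma cfa_zero_inv_natCast_add (a : ℕ) {t : ℝ} (ht : t ∈ Set.Ico 0 1) :
    cfa 0 ((a : ℝ) + t)⁻¹ = a := by
  rw [cfa, inv_inv, Nat.floor_eq_iff (by linarith [ht.1])]
  constructor <;> linarith [ht.1, ht.2]

lemma gaussMap_inv_natCast_add (a : ℕ) {t : ℝ} (ht : t ∈ Set.Ico 0 1) :
    gaussMap ((a : ℝ) + t)⁻¹ = t := by
  rw [gaussMap, inv_inv, Int.fract_natCast_add, Int.fract_eq_self.2 ht]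

lemma cfCylinder_cons {a : ℕ} (ha : 0 < a) (l : List ℕ) (E : Set ℝ) :
    cfCylinder (a :: l) E = (fun t => ((a : ℝ) + t)⁻¹) '' cfCylinder l E := by
  ext x
  simp only [cfCylinder, List.length_cons, cfPrefix_succ, Function.iterate_succ_apply,
    List.cons.injEq, Set.mem_ofPred_eq, Set.mem_image]
  constructor
  · rintro ⟨hx, ⟨rfl, hpre⟩, hE⟩
    refine ⟨gaussMap x, ⟨mapsTo_gaussMap hx, hpre, hE⟩, ?_⟩
    rw [natCast_cfa_zero_add_gaussMap hx.2.1, inv_inv]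
  · rintro ⟨t, ⟨ht, hpre, hE⟩, rfl⟩
    have ht' : t ∈ Set.Ico 0 1 := Set.Ioo_subset_Ico_self ht.2
    have h1 : (1 : ℝ) < a + t := by linarith [(Nat.one_le_cast.2 ha : (1 : ℝ) ≤ a), ht.2.1]
    refine ⟨⟨?_, inv_pos.2 (by linarith), inv_lt_one_of_one_lt₀ h1⟩,
      ⟨cfa_zero_inv_natCast_add a ht', ?_⟩, ?_⟩
    · exact irrational_inv_iff.2 (irrational_natCast_add_iff.2 ht.1)
    all_goals rwa [gaussMap_inv_natCast_add a ht']

lemma cfCylinder_eq_image {l : List ℕ} (hl : ∀ a ∈ l, 0 < a) (E : Set ℝ) :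
    cfCylinder l E = cfWithTail l '' (unitIrrationals ∩ E) := by
  induction l with
  | nil => ext x; simp [cfCylinder, cfPrefix, cfWithTail]
  | cons a l ih =>
    rw [cfCylinder_cons (hl a List.mem_cons_self), ih fun b hb => hl b (List.mem_cons_of_mem _ hb),
      ← Set.image_comp]
    rfl

lemma image_inv_natCast_add_irrational_inter_uIoo (a : ℕ) {u v : ℝ} (hu : 0 < a + u)
    (hv : 0 < a + v) :
    (fun t => ((a : ℝ) + t)⁻¹) '' ({x | Irrational x} ∩ Set.uIoo u v) =
      {x | Irrational x} ∩ Set.uIoo ((a : ℝ) + u)⁻¹ ((a : ℝ) + v)⁻¹ := by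
  wlog huv : u ≤ v generalizing u v
  · rw [Set.uIoo_comm, this hv hu (le_of_not_ge huv), Set.uIoo_comm]
  rw [Set.uIoo_of_le huv, Set.uIoo_of_ge (inv_anti₀ hu (by linarith))]
  ext y
  simp only [Set.mem_image, Set.mem_inter_iff, Set.mem_ofPred_eq, Set.mem_Ioo]
  constructor
  · rintro ⟨t, ⟨ht, htu, htv⟩, rfl⟩
    exact ⟨irrational_inv_iff.2 (irrational_natCast_add_iff.2 ht),
      inv_strictAnti₀ (by linarith) (by linarith), inv_strictAnti₀ hu (by linarith)⟩
  · rintro ⟨hy, hvy, hyu⟩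
    have hy0 : 0 < y := (inv_pos.2 hv).trans hvy
    refine ⟨y⁻¹ - a, ⟨?_, ?_, ?_⟩, by simp⟩
    · exact (irrational_inv_iff.2 hy).sub_natCast a
    · linarith [(lt_inv_comm₀ hy0 hu).1 hyu]
    · linarith [(inv_lt_comm₀ hv hy0).1 hvy]

lemma image_cfWithTail_irrational_inter_uIoo {l : List ℕ} (hl : ∀ a ∈ l, 0 < a) {u v : ℝ}
    (hu : 0 ≤ u) (hv : 0 ≤ v) :
    cfWithTail l '' ({x | Irrational x} ∩ Set.uIoo u v) =
      {x | Irrational x} ∩ Set.uIoo (cfWithTail l u) (cfWithTail l v) := by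
  induction l with
  | nil => simp [cfWithTail]
  | cons a l ih =>
    have ha : (1 : ℝ) ≤ a := Nat.one_le_cast.2 (hl a List.mem_cons_self)
    have hcomp : cfWithTail (a :: l) = (fun t => ((a : ℝ) + t)⁻¹) ∘ cfWithTail l := rfl
    rw [hcomp, Set.image_comp, ih fun b hb => hl b (List.mem_cons_of_mem _ hb),
      image_inv_natCast_add_irrational_inter_uIoo a (by linarith [cfWithTail_nonneg l hu])
        (by linarith [cfWithTail_nonneg l hv])]
    rfl

lemma volume_cfCylinder_uIoo {l : List ℕ} (hl : ∀ a ∈ l, 0 < a) {u v : ℝ}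
    (hu : u ∈ Set.Icc 0 1) (hv : v ∈ Set.Icc 0 1) :
    volume (cfCylinder l (Set.uIoo u v)) = ENNReal.ofReal (|u - v| /
      ((cfMatrix l 1 0 * u + cfMatrix l 1 1) * (cfMatrix l 1 0 * v + cfMatrix l 1 1))) := by
  have hU : unitIrrationals ∩ Set.uIoo u v = {x | Irrational x} ∩ Set.uIoo u v := by
    rw [unitIrrationals, Set.inter_assoc, Set.inter_eq_right.2 (Set.uIoo_subset_Ioo hu hv)]
  rw [cfCylinder_eq_image hl, hU, image_cfWithTail_irrational_inter_uIoo hl hu.1 hv.1,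
    Set.inter_comm, measure_inter_conull volume_setOf_irrational_compl, Real.volume_uIoo,
    abs_sub_comm, abs_cfWithTail_sub hl hu.1 hv.1]

/-- `P(a_{n+1} ≥ K | a_1, …, a_n = l)` for Lebesgue measure on `(0,1)`, computed from
`volume_cfCylinder_uIoo` (see `measureReal_cfPrefix_eq_and_le_cfa`). -/
noncomputable def condProbNextGe (K : ℕ) (l : List ℕ) : ℝ :=
  (cfMatrix l 1 0 + cfMatrix l 1 1) / (cfMatrix l 1 0 + K * cfMatrix l 1 1)

lemma abs_ite_sub_condProbNextGe_le {K : ℕ} (hK : 0 < K) (p : Prop) [Decidable p] (l : List ℕ) :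
    |(if p then 1 else 0) - condProbNextGe K l| ≤ 1 := by
  have hC := cfMatrix_nonneg l 1 0
  have hD := cfMatrix_nonneg l 1 1
  have hK1 : (1 : ℝ) ≤ K := Nat.one_le_cast.2 hK
  have h0 : 0 ≤ condProbNextGe K l := by unfold condProbNextGe; positivity
  have h1 : condProbNextGe K l ≤ 1 := div_le_one_of_le₀ (by nlinarith) (by positivity)
  rw [abs_sub_le_iff]
  split_ifs <;> constructor <;> linarith

lemma inv_le_condProbNextGe {K : ℕ} (hK : 0 < K) {l : List ℕ} (hl : ∀ a ∈ l, 0 < a) :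
    (K : ℝ)⁻¹ ≤ condProbNextGe K l := by
  have hC := cfMatrix_nonneg l 1 0
  have hD := one_le_cfMatrix_one_one hl
  have hK0 : (K : ℝ) ≠ 0 := by positivity
  rw [condProbNextGe, le_div_iff₀ (by positivity), mul_add, ← mul_assoc, inv_mul_cancel₀ hK0,
    one_mul]
  linarith [mul_le_of_le_one_left hC (inv_le_one_of_one_le₀ (Nat.one_le_cast.2 hK : (1 : ℝ) ≤ K))]

lemma setOf_cfPrefix_eq_inter_unitIrrationals (l : List ℕ) :
    {x | cfPrefix l.length x = l} ∩ unitIrrationals = cfCylinder l (Set.Ioo 0 1) := by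
  ext x
  exact ⟨fun ⟨hpre, hx⟩ => ⟨hx, hpre, ((mapsTo_gaussMap.iterate _) hx).2⟩,
    fun ⟨hx, hpre, _⟩ => ⟨hpre, hx⟩⟩

lemma setOf_cfPrefix_eq_and_le_cfa_inter_unitIrrationals {K : ℕ} (hK : 0 < K) (l : List ℕ) :
    {x | cfPrefix l.length x = l ∧ K ≤ cfa l.length x} ∩ unitIrrationals =
      cfCylinder l (Set.Ioo 0 (K : ℝ)⁻¹) := by
  ext x
  exact ⟨fun ⟨⟨hpre, hKx⟩, hx⟩ => ⟨hx, hpre, ((mapsTo_gaussMap.iterate _) hx).2.1,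
      (le_cfa_iff hK hx).1 hKx⟩, fun ⟨hx, hpre, hT⟩ => ⟨⟨hpre, (le_cfa_iff hK hx).2 hT.2⟩, hx⟩⟩

lemma measureReal_cfPrefix_eq_and_le_cfa {K : ℕ} (hK : 0 < K) (n : ℕ) (l : List ℕ) :
    (volume.restrict (Set.Ioo (0 : ℝ) 1)).real {x | cfPrefix n x = l ∧ K ≤ cfa n x} =
      condProbNextGe K l * (volume.restrict (Set.Ioo (0 : ℝ) 1)).real {x | cfPrefix n x = l} := by
  simp only [measureReal_def, restrict_Ioo_apply_eq_volume_inter_unitIrrationals]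
  by_cases hl : l.length = n ∧ ∀ a ∈ l, 0 < a
  · obtain ⟨rfl, hl⟩ := hl
    have hK0 : (0 : ℝ) < K := Nat.cast_pos.2 hK
    have hKinv : (K : ℝ)⁻¹ ∈ Set.Icc 0 1 :=
      ⟨by positivity, inv_le_one_of_one_le₀ (Nat.one_le_cast.2 hK)⟩
    have hC := cfMatrix_nonneg l 1 0
    have hD := one_le_cfMatrix_one_one hl
    rw [setOf_cfPrefix_eq_inter_unitIrrationals,
      setOf_cfPrefix_eq_and_le_cfa_inter_unitIrrationals hK, ← Set.uIoo_of_le zero_le_one,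
      ← Set.uIoo_of_le hKinv.1,
      volume_cfCylinder_uIoo hl ⟨le_rfl, zero_le_one⟩ ⟨zero_le_one, le_rfl⟩,
      volume_cfCylinder_uIoo hl ⟨le_rfl, zero_le_one⟩ hKinv, ENNReal.toReal_ofReal (by positivity),
      ENNReal.toReal_ofReal (by positivity), condProbNextGe]
    simp only [zero_sub, abs_neg, abs_one, abs_of_pos (inv_pos.2 hK0), mul_zero, zero_add, mul_one]
    field_simp
  · have hnull : ∀ s ⊆ {x | cfPrefix n x = l}, s ∩ unitIrrationals = ∅ := by
      refine fun s hs => Set.eq_empty_of_forall_notMem fun x ⟨hxs, hx⟩ => hl ?_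
      rw [← (hs hxs : cfPrefix n x = l)]
      exact ⟨length_cfPrefix n x, fun a => pos_of_mem_cfPrefix hx⟩
    rw [hnull _ le_rfl, hnull _ fun x hx => hx.1]
    simp

noncomputable def cfMartingaleDiff (K i : ℕ) (x : ℝ) : ℝ :=
  (if K ≤ cfa i x then 1 else 0) - condProbNextGe K (cfPrefix i x)

lemma measurable_cfMartingaleDiff (K i : ℕ) : Measurable (cfMartingaleDiff K i) :=
  (Measurable.ite (measurableSet_le measurable_const (measurable_cfa i)) measurable_const
    measurable_const).sub (measurable_comp_cfPrefix _ i)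

lemma integral_cfMartingaleDiff_mul_comp_cfPrefix {K : ℕ} (hK : 0 < K) (n : ℕ)
    {G : List ℕ → ℝ} {C : ℝ} (hG : ∀ l, |G l| ≤ C) :
    ∫ x, cfMartingaleDiff K n x * G (cfPrefix n x) ∂(volume.restrict (Set.Ioo (0 : ℝ) 1)) = 0 := by
  set μ := volume.restrict (Set.Ioo (0 : ℝ) 1)
  have hfiber : ∀ l, MeasurableSet {x | cfPrefix n x = l} := fun l =>
    (measurable_comp_cfPrefix (· = l) n).setOf
  have hint : Integrable (fun x => cfMartingaleDiff K n x * G (cfPrefix n x)) μ := by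
    refine .of_bound ((measurable_cfMartingaleDiff K n).mul
      (measurable_comp_cfPrefix G n)).aestronglyMeasurable (1 * C) (ae_of_all _ fun x => ?_)
    rw [norm_mul]
    exact mul_le_mul (abs_ite_sub_condProbNextGe_le hK _ _) (hG _) (norm_nonneg _) zero_le_one
  have hcover : (⋃ l, {x | cfPrefix n x = l}) = Set.univ :=
    Set.eq_univ_of_forall fun x => Set.mem_iUnion.2 ⟨_, rfl⟩
  rw [← setIntegral_univ, ← hcover, integral_iUnion hfiber
    (fun l l' h => Set.disjoint_left.2 fun x hl hl' => h (hl.symm.trans hl')) hint.integrableOn]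
  refine (tsum_congr fun l => ?_).trans tsum_zero
  have hXmeas : MeasurableSet {x | K ≤ cfa n x} :=
    measurableSet_le measurable_const (measurable_cfa n)
  calc ∫ x in {x | cfPrefix n x = l}, cfMartingaleDiff K n x * G (cfPrefix n x) ∂μ
      = ∫ x in {x | cfPrefix n x = l},
          ({x | K ≤ cfa n x}.indicator (fun _ => 1) x - condProbNextGe K l) * G l ∂μ :=
        setIntegral_congr_fun (hfiber l) fun x (hx : cfPrefix n x = l) => by
          rw [cfMartingaleDiff, hx, Set.indicator_apply]
          rfl
    _ = (μ.real {x | cfPrefix n x = l ∧ K ≤ cfa n x} -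
          condProbNextGe K l * μ.real {x | cfPrefix n x = l}) * G l := by
        rw [integral_mul_const, integral_sub ((integrable_const 1).indicator hXmeas)
          (integrable_const _), setIntegral_indicator hXmeas, setIntegral_const, setIntegral_const,
          smul_eq_mul, mul_one, smul_eq_mul, mul_comm (μ.real _)]
        rfl
    _ = 0 := by rw [measureReal_cfPrefix_eq_and_le_cfa hK, sub_self, zero_mul]

lemma integral_cfMartingaleDiff_mul_cfMartingaleDiff {K : ℕ} (hK : 0 < K) {i j : ℕ} (hij : i ≠ j) :
    ∫ x, cfMartingaleDiff K i x * cfMartingaleDiff K j x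
      ∂(volume.restrict (Set.Ioo (0 : ℝ) 1)) = 0 := by
  wlog h : i < j generalizing i j
  · simp_rw [mul_comm (cfMartingaleDiff K i _)]
    exact this hij.symm (by omega)
  let G (l : List ℕ) : ℝ := (if K ≤ l.getD i 0 then 1 else 0) - condProbNextGe K (l.take i)
  have hG : ∀ x, cfMartingaleDiff K i x = G (cfPrefix j x) := fun x => by
    simp only [G, getD_cfPrefix h, take_cfPrefix h.le, cfMartingaleDiff]
  simp_rw [hG, mul_comm (G _)]
  exact integral_cfMartingaleDiff_mul_comp_cfPrefix hK j fun _ =>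
    abs_ite_sub_condProbNextGe_le hK _ _

section OrthogonalSLLN

variable {Ω : Type*} [MeasurableSpace Ω] {μ : Measure Ω}

lemma ae_tendsto_zero_of_summable_integral {g : ℕ → Ω → ℝ} (hg : ∀ m, Integrable (g m) μ)
    (hg0 : ∀ m x, 0 ≤ g m x) (hs : Summable fun m => ∫ x, g m x ∂μ) :
    ∀ᵐ x ∂μ, Tendsto (fun m => g m x) atTop (𝓝 0) := by
  have hmeas : ∀ m, AEMeasurable (fun x => ENNReal.ofReal (g m x)) μ := fun m =>
    (hg m).aemeasurable.ennreal_ofReal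
  have hfin : ∫⁻ x, ∑' m, ENNReal.ofReal (g m x) ∂μ ≠ ⊤ := by
    rw [lintegral_tsum hmeas]
    simp_rw [← ofReal_integral_eq_lintegral_ofReal (hg _) (ae_of_all _ (hg0 _))]
    rw [← ENNReal.ofReal_tsum_of_nonneg (fun m => integral_nonneg (hg0 m)) hs]
    exact ENNReal.ofReal_ne_top
  filter_upwards [ae_lt_top' (AEMeasurable.tsum hmeas) hfin] with x hx
  have h := (ENNReal.tendsto_toReal ENNReal.zero_ne_top).comp
    (ENNReal.tendsto_atTop_zero_of_tsum_ne_top hx.ne)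
  simpa [Function.comp_def, ENNReal.toReal_ofReal (hg0 _ x)] using h

lemma abs_sum_range_le {f : ℕ → ℝ} {C : ℝ} (hC : ∀ i, |f i| ≤ C) (n : ℕ) :
    |∑ i ∈ Finset.range n, f i| ≤ n * C :=
  (Finset.abs_sum_le_sum_abs _ _).trans <| by
    simpa using Finset.sum_le_sum fun i (_ : i ∈ Finset.range n) => hC i

lemma tendsto_average_of_tendsto_average_sq {f : ℕ → ℝ} {C : ℝ} (hC : ∀ i, |f i| ≤ C)
    (h : Tendsto (fun m : ℕ => ((m ^ 2 : ℕ) : ℝ)⁻¹ * ∑ i ∈ Finset.range (m ^ 2), f i) atTop (𝓝 0)) :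
    Tendsto (fun n : ℕ => (n : ℝ)⁻¹ * ∑ i ∈ Finset.range n, f i) atTop (𝓝 0) := by
  have hsqrt : Tendsto Nat.sqrt atTop atTop :=
    tendsto_atTop_atTop.2 fun b => ⟨b ^ 2, fun n hn => Nat.le_sqrt'.2 hn⟩
  have hbound : Tendsto (fun n : ℕ => ‖((n.sqrt ^ 2 : ℕ) : ℝ)⁻¹ *
      ∑ i ∈ Finset.range (n.sqrt ^ 2), f i‖ + 2 * C / n.sqrt) atTop (𝓝 0) := by
    simpa using (h.norm.comp hsqrt).add
      ((tendsto_const_div_atTop_nhds_zero_nat (2 * C)).comp hsqrt)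
  refine squeeze_zero_norm' ?_ hbound
  filter_upwards [eventually_gt_atTop 0] with n hn
  set m := n.sqrt
  have hm : 0 < m := Nat.sqrt_pos.2 hn
  have hmn : m ^ 2 ≤ n := Nat.sqrt_le' n
  have hnm : n - m ^ 2 ≤ 2 * m := by
    rw [Nat.sub_le_iff_le_add]
    nlinarith [Nat.lt_succ_sqrt' n]
  have hC0 : 0 ≤ C := (abs_nonneg _).trans (hC 0)
  have hQn : ((m ^ 2 : ℕ) : ℝ) ≤ n := Nat.cast_le.2 hmn
  have htail : |∑ i ∈ Finset.Ico (m ^ 2) n, f i| ≤ 2 * m * C := by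
    refine (Finset.abs_sum_le_sum_abs _ _).trans ?_
    calc ∑ i ∈ Finset.Ico (m ^ 2) n, |f i| ≤ ∑ i ∈ Finset.Ico (m ^ 2) n, C :=
          Finset.sum_le_sum fun i _ => hC i
      _ = (n - m ^ 2 : ℕ) * C := by simp
      _ ≤ 2 * m * C := by gcongr; exact_mod_cast hnm
  rw [← Finset.sum_range_add_sum_Ico f hmn, mul_add, Real.norm_eq_abs, Real.norm_eq_abs]
  refine (abs_add_le _ _).trans (add_le_add ?_ ?_)
  · rw [abs_mul, abs_mul, abs_inv, abs_inv, Nat.abs_cast, Nat.abs_cast]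
    gcongr
  · rw [abs_mul, abs_inv, Nat.abs_cast]
    calc (n : ℝ)⁻¹ * |∑ i ∈ Finset.Ico (m ^ 2) n, f i| ≤ ((m ^ 2 : ℕ) : ℝ)⁻¹ * (2 * m * C) := by
          gcongr
      _ = 2 * C / m := by push_cast; field_simp

variable [IsFiniteMeasure μ]

lemma integral_sq_sum_le_of_orthogonal {f : ℕ → Ω → ℝ} {C : ℝ} (hf : ∀ i, Measurable (f i))
    (hC : ∀ i x, |f i x| ≤ C) (horth : Pairwise fun i j => ∫ x, f i x * f j x ∂μ = 0) (n : ℕ) :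
    ∫ x, (∑ i ∈ Finset.range n, f i x) ^ 2 ∂μ ≤ n * (C ^ 2 * μ.real Set.univ) := by
  have hsq : ∀ i x, f i x * f i x ≤ C ^ 2 := fun i x => by
    rw [← abs_mul_abs_self, sq]
    exact mul_self_le_mul_self (abs_nonneg _) (hC i x)
  have hint : ∀ i j, Integrable (fun x => f i x * f j x) μ := fun i j =>
    .of_bound ((hf i).mul (hf j)).aestronglyMeasurable (C * C) <| ae_of_all _ fun x => by
      rw [norm_mul]
      exact mul_le_mul (hC i x) (hC j x) (norm_nonneg _) ((abs_nonneg _).trans (hC i x))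
  calc ∫ x, (∑ i ∈ Finset.range n, f i x) ^ 2 ∂μ
      = ∑ i ∈ Finset.range n, ∑ j ∈ Finset.range n, ∫ x, f i x * f j x ∂μ := by
        simp_rw [sq, Finset.sum_mul_sum]
        rw [integral_finsetSum _ fun i _ => integrable_finsetSum _ fun j _ => hint i j]
        exact Finset.sum_congr rfl fun i _ => integral_finsetSum _ fun j _ => hint i j
    _ = ∑ i ∈ Finset.range n, ∫ x, f i x * f i x ∂μ :=
        Finset.sum_congr rfl fun i hi =>
          Finset.sum_eq_single i (fun j _ hji => horth hji.symm) fun h => absurd hi h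
    _ ≤ ∑ _i ∈ Finset.range n, C ^ 2 * μ.real Set.univ := Finset.sum_le_sum fun i _ => by
        simpa [mul_comm] using integral_mono (hint i i) (integrable_const (C ^ 2)) (hsq i)
    _ = n * (C ^ 2 * μ.real Set.univ) := by simp

lemma ae_tendsto_average_zero_of_orthogonal {f : ℕ → Ω → ℝ} {C : ℝ} (hf : ∀ i, Measurable (f i))
    (hC : ∀ i x, |f i x| ≤ C) (horth : Pairwise fun i j => ∫ x, f i x * f j x ∂μ = 0) :
    ∀ᵐ x ∂μ, Tendsto (fun n : ℕ => (n : ℝ)⁻¹ * ∑ i ∈ Finset.range n, f i x) atTop (𝓝 0) := by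
  set g : ℕ → Ω → ℝ := fun m x => ((m ^ 2 : ℕ) : ℝ)⁻¹ * ∑ i ∈ Finset.range (m ^ 2), f i x
  have hg : ∀ m x, g m x ^ 2 ≤ C ^ 2 := fun m x => by
    rw [← sq_abs]
    refine pow_le_pow_left₀ (abs_nonneg _) ?_ 2
    rcases Nat.eq_zero_or_pos m with rfl | hm
    · simpa [g] using (abs_nonneg _).trans (hC 0 x)
    rw [abs_mul, abs_inv, Nat.abs_cast, inv_mul_le_iff₀ (by positivity)]
    exact abs_sum_range_le (hC · x) _
  have hgm : ∀ m, Measurable fun x => g m x ^ 2 := fun m =>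
    ((Finset.measurable_sum _ fun i _ => hf i).const_mul _).pow_const 2
  have hint : ∀ m, Integrable (fun x => g m x ^ 2) μ := fun m =>
    .of_bound (hgm m).aestronglyMeasurable (C ^ 2) <| ae_of_all _ fun x => by
      rw [Real.norm_eq_abs, abs_sq]; exact hg m x
  have hle : ∀ m, ∫ x, g m x ^ 2 ∂μ ≤ C ^ 2 * μ.real Set.univ * ((m : ℝ) ^ 2)⁻¹ := fun m => by
    simp_rw [g, mul_pow]
    rw [integral_const_mul]
    rcases Nat.eq_zero_or_pos m with rfl | hm
    · simp
    calc _ ≤ (((m ^ 2 : ℕ) : ℝ)⁻¹ ^ 2) * ((m ^ 2 : ℕ) * (C ^ 2 * μ.real Set.univ)) := by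
          gcongr; exact integral_sq_sum_le_of_orthogonal hf hC horth _
      _ = _ := by push_cast; field_simp
  have hsum : Summable fun m => ∫ x, g m x ^ 2 ∂μ :=
    .of_nonneg_of_le (fun m => integral_nonneg fun x => sq_nonneg _) hle
      ((Real.summable_nat_pow_inv.2 one_lt_two).mul_left _)
  filter_upwards [ae_tendsto_zero_of_summable_integral hint (fun m x => sq_nonneg _) hsum]
    with x hx
  refine tendsto_average_of_tendsto_average_sq (hC · x) ?_
  have := hx.sqrt
  simp_rw [Real.sqrt_sq_eq_abs, Real.sqrt_zero] at this
  exact (tendsto_zero_iff_abs_tendsto_zero _).2 this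

end OrthogonalSLLN

lemma tendsto_average_atTop_of_frequency {a : ℕ → ℕ}
    (h : ∀ K : ℕ, 0 < K → ∀ ε > 0, ∀ᶠ n : ℕ in atTop,
      (K : ℝ)⁻¹ - ε ≤ (n : ℝ)⁻¹ * ∑ i ∈ Finset.range n, if K ≤ a i then (1 : ℝ) else 0) :
    Tendsto (fun n : ℕ => (n : ℝ)⁻¹ * ∑ i ∈ Finset.range n, (a i : ℝ)) atTop atTop := by
  refine tendsto_atTop.2 fun b => ?_
  obtain ⟨M, hM⟩ := (tendsto_atTop.1 Real.tendsto_sum_range_one_div_nat_succ_atTop (b + 1)).exists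
  have hcount : ∀ i, ∑ k ∈ Finset.range M, (if k + 1 ≤ a i then (1 : ℝ) else 0) ≤ a i := fun i => by
    rw [Finset.sum_boole]
    have : (Finset.range M).filter (fun k => k + 1 ≤ a i) ⊆ Finset.range (a i) := fun k hk => by
      simp only [Finset.mem_filter, Finset.mem_range] at hk ⊢
      omega
    exact_mod_cast (Finset.card_le_card this).trans (Finset.card_range _).le
  filter_upwards [(eventually_all_finset (Finset.range M)).2 fun k _ =>
    h (k + 1) k.succ_pos ((M : ℝ) + 1)⁻¹ (by positivity)] with n hn
  have hMε : (M : ℝ) * ((M : ℝ) + 1)⁻¹ ≤ 1 := by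
    rw [mul_inv_le_iff₀ (by positivity)]; linarith
  calc b ≤ ∑ k ∈ Finset.range M, (1 / ((k : ℝ) + 1) - ((M : ℝ) + 1)⁻¹) := by
        rw [Finset.sum_sub_distrib, Finset.sum_const, Finset.card_range, nsmul_eq_mul]
        linarith
    _ ≤ ∑ k ∈ Finset.range M,
          (n : ℝ)⁻¹ * ∑ i ∈ Finset.range n, if k + 1 ≤ a i then (1 : ℝ) else 0 :=
        Finset.sum_le_sum fun k hk => by simpa [one_div] using hn k hk
    _ = (n : ℝ)⁻¹ * ∑ i ∈ Finset.range n, ∑ k ∈ Finset.range M,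
          if k + 1 ≤ a i then (1 : ℝ) else 0 := by
        rw [← Finset.mul_sum, Finset.sum_comm]
    _ ≤ (n : ℝ)⁻¹ * ∑ i ∈ Finset.range n, (a i : ℝ) := by
        gcongr with i
        exact hcount i

lemma ae_tendsto_average_cfMartingaleDiff {K : ℕ} (hK : 0 < K) :
    ∀ᵐ x ∂(volume.restrict (Set.Ioo (0 : ℝ) 1)),
      Tendsto (fun n : ℕ => (n : ℝ)⁻¹ * ∑ i ∈ Finset.range n, cfMartingaleDiff K i x)
        atTop (𝓝 0) :=
  ae_tendsto_average_zero_of_orthogonal (measurable_cfMartingaleDiff K)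
    (fun _ _ => abs_ite_sub_condProbNextGe_le hK _ _)
    fun _ _ hij => integral_cfMartingaleDiff_mul_cfMartingaleDiff hK hij

lemma eventually_inv_sub_le_frequency_cfa {K : ℕ} (hK : 0 < K) {x : ℝ}
    (hx : x ∈ unitIrrationals)
    (hD : Tendsto (fun n : ℕ => (n : ℝ)⁻¹ * ∑ i ∈ Finset.range n, cfMartingaleDiff K i x)
      atTop (𝓝 0))
    {ε : ℝ} (hε : 0 < ε) :
    ∀ᶠ n : ℕ in atTop,
      (K : ℝ)⁻¹ - ε ≤ (n : ℝ)⁻¹ * ∑ i ∈ Finset.range n, if K ≤ cfa i x then (1 : ℝ) else 0 := by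
  filter_upwards [hD.eventually (Ioi_mem_nhds (neg_lt_zero.2 hε)), eventually_gt_atTop 0]
    with n hn hn0
  have hY : (K : ℝ)⁻¹ ≤ (n : ℝ)⁻¹ * ∑ i ∈ Finset.range n, condProbNextGe K (cfPrefix i x) := by
    rw [le_inv_mul_iff₀ (by positivity)]
    simpa using Finset.card_nsmul_le_sum (Finset.range n) _ _
      fun i _ => inv_le_condProbNextGe hK fun a => pos_of_mem_cfPrefix hx
  have hsplit : ∑ i ∈ Finset.range n, (if K ≤ cfa i x then (1 : ℝ) else 0) =
      ∑ i ∈ Finset.range n, cfMartingaleDiff K i x +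
        ∑ i ∈ Finset.range n, condProbNextGe K (cfPrefix i x) := by
    rw [← Finset.sum_add_distrib]
    simp [cfMartingaleDiff]
  rw [hsplit, mul_add]
  linarith [hn]

/-- For Lebesgue-almost every irrational `x ∈ (0,1)`, the averages of the continued fraction
partial quotients tend to infinity: `(1/n)(a_1(x) + ⋯ + a_n(x)) → +∞`. -/
theorem average_partial_quotients_tendsto_atTop :
    ∀ᵐ x ∂(volume.restrict (Set.Ioo (0 : ℝ) 1)), Irrational x →
      Tendsto (fun n : ℕ => (n : ℝ)⁻¹ * ∑ i ∈ Finset.range n, (cfa i x : ℝ))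
        atTop atTop := by
  have hD := ae_all_iff.2 fun K : ℕ =>
    eventually_imp_distrib_left.2 fun hK : 0 < K => ae_tendsto_average_cfMartingaleDiff hK
  filter_upwards [hD, ae_restrict_mem measurableSet_Ioo] with x hxD hx01 hirr
  exact tendsto_average_atTop_of_frequency fun K hK ε hε =>
    eventually_inv_sub_le_frequency_cfa hK ⟨hirr, hx01⟩ (hxD K hK) hε
end

section
/- Let n ≥ 1 and let A, B ⊆ {0,1}^n. Define the sumset A + B = {a + b : a ∈ A, b ∈ B} ⊆ {0,1,2}^n, where addition is coordinatewise in ℤ. Then |A + B| ≥ |A|^α · |B|^α, where α = log 3 / log 4. -/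
open Real Set Filter

lemma sinh_mul_hasDerivAt (γ x : ℝ) :
    HasDerivAt (fun y => Real.sinh (γ * y)) (γ * Real.cosh (γ * x)) x := by
  have h := (Real.hasDerivAt_sinh (γ * x)).comp x ((hasDerivAt_id x).const_mul γ)
  simpa [mul_comm, Function.comp_def] using h

lemma cosh_mul_hasDerivAt (γ x : ℝ) :
    HasDerivAt (fun y => Real.cosh (γ * y)) (γ * Real.sinh (γ * x)) x := by
  have h := (Real.hasDerivAt_cosh (γ * x)).comp x ((hasDerivAt_id x).const_mul γ)
  simpa [mul_comm, Function.comp_def] using h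

/-- L1: `γ cosh(γy) sinh y ≤ sinh(γy) cosh y` for `0 ≤ γ ≤ 1`, `0 ≤ y`. -/
lemma L1 (γ : ℝ) (hγ0 : 0 ≤ γ) (hγ1 : γ ≤ 1) {y : ℝ} (hy : 0 ≤ y) :
    γ * Real.cosh (γ * y) * Real.sinh y ≤ Real.sinh (γ * y) * Real.cosh y := by
  set k : ℝ → ℝ := fun y => Real.sinh (γ * y) * Real.cosh y - γ * Real.cosh (γ * y) * Real.sinh y
    with hk
  have hderiv : ∀ x : ℝ, HasDerivAt k ((1 - γ ^ 2) * (Real.sinh (γ * x) * Real.sinh x)) x := by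
    intro x
    have h1 := ((sinh_mul_hasDerivAt γ x).mul (Real.hasDerivAt_cosh x)).sub
      (((cosh_mul_hasDerivAt γ x).const_mul γ).mul (Real.hasDerivAt_sinh x))
    refine h1.congr_deriv ?_
    ring
  have hmono : Monotone k := by
    apply monotone_of_deriv_nonneg (fun x => (hderiv x).differentiableAt)
    intro x
    rw [(hderiv x).deriv]
    rcases le_or_gt 0 x with hx | hx
    · have h1 : 0 ≤ Real.sinh (γ * x) := Real.sinh_nonneg_iff.2 (by positivity)
      have h2 : 0 ≤ Real.sinh x := Real.sinh_nonneg_iff.2 hx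
      have hγ2 : γ ^ 2 ≤ 1 := by nlinarith
      exact mul_nonneg (by linarith) (mul_nonneg h1 h2)
    · have h1 : Real.sinh (γ * x) ≤ 0 := Real.sinh_nonpos_iff.2 (by nlinarith)
      have h2 : Real.sinh x ≤ 0 := Real.sinh_nonpos_iff.2 hx.le
      have hγ2 : γ ^ 2 ≤ 1 := by nlinarith
      exact mul_nonneg (by linarith) (by nlinarith [mul_nonneg (neg_nonneg.2 h1) (neg_nonneg.2 h2)])
  have h0 : k 0 = 0 := by simp [hk]
  have := hmono hy
  rw [h0] at this
  simp only [hk] at this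
  linarith

/-- L2: the ratio `sinh(γx)/sinh(x)` is decreasing: for `0 < x₁ ≤ x₂`,
`sinh(γ x₂) sinh x₁ ≤ sinh(γ x₁) sinh x₂`. -/
lemma L2 (γ : ℝ) (hγ0 : 0 ≤ γ) (hγ1 : γ ≤ 1) {x₁ x₂ : ℝ} (h1 : 0 < x₁) (h12 : x₁ ≤ x₂) :
    Real.sinh (γ * x₂) * Real.sinh x₁ ≤ Real.sinh (γ * x₁) * Real.sinh x₂ := by
  set q : ℝ → ℝ := fun x => Real.sinh (γ * x) / Real.sinh x with hq
  have hanti : AntitoneOn q (Ici x₁) := by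
    apply antitoneOn_of_deriv_nonpos (convex_Ici x₁)
    · apply ContinuousOn.div
      · exact (Real.continuous_sinh.comp (continuous_const.mul continuous_id)).continuousOn
      · exact Real.continuous_sinh.continuousOn
      · intro x hx
        simp only [mem_Ici] at hx
        exact Real.sinh_ne_zero.2 (lt_of_lt_of_le h1 hx).ne'
    · intro x hx
      rw [interior_Ici] at hx
      have hxpos : 0 < x := lt_trans h1 hx
      have hsx : Real.sinh x ≠ 0 := Real.sinh_ne_zero.2 hxpos.ne'
      exact ((sinh_mul_hasDerivAt γ x).div (Real.hasDerivAt_sinh x) hsx).differentiableAt.differentiableWithinAt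
    · intro x hx
      rw [interior_Ici] at hx
      have hxpos : 0 < x := lt_trans h1 hx
      have hsx : Real.sinh x ≠ 0 := Real.sinh_ne_zero.2 hxpos.ne'
      have hd := ((sinh_mul_hasDerivAt γ x).div (Real.hasDerivAt_sinh x) hsx).deriv
      have hqe : q = (fun y => Real.sinh (γ * y)) / Real.sinh := rfl
      rw [hqe, hd]
      apply div_nonpos_of_nonpos_of_nonneg
      · have := L1 γ hγ0 hγ1 hxpos.le
        nlinarith
      · positivity
  have h := hanti (self_mem_Ici) (mem_Ici.2 h12) h12
  simp only [hq] at h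
  have hs1 : 0 < Real.sinh x₁ := Real.sinh_pos_iff.2 h1
  have hs2 : 0 < Real.sinh x₂ := Real.sinh_pos_iff.2 (lt_of_lt_of_le h1 h12)
  rwa [div_le_div_iff₀ hs2 hs1] at h

section Beta

lemma log2_pos : (0:ℝ) < Real.log 2 := Real.log_pos (by norm_num)

lemma beta_mul_log2 : (Real.log 3 / Real.log 2) * Real.log 2 = Real.log 3 :=
  div_mul_cancel₀ _ log2_pos.ne'

lemma beta_gt : (3/2 : ℝ) < Real.log 3 / Real.log 2 := by
  have h89 : Real.log 8 < Real.log 9 := Real.log_lt_log (by norm_num) (by norm_num)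
  have h8 : Real.log 8 = 3 * Real.log 2 := by
    rw [show (8:ℝ) = 2 ^ (3:ℕ) by norm_num, Real.log_pow]; push_cast; ring
  have h9 : Real.log 9 = 2 * Real.log 3 := by
    rw [show (9:ℝ) = 3 ^ (2:ℕ) by norm_num, Real.log_pow]; push_cast; ring
  rw [lt_div_iff₀ log2_pos]; nlinarith [log2_pos]

lemma beta_lt : Real.log 3 / Real.log 2 < 2 := by
  have h34 : Real.log 3 < Real.log 4 := Real.log_lt_log (by norm_num) (by norm_num)
  have h4 : Real.log 4 = 2 * Real.log 2 := by
    rw [show (4:ℝ) = 2 ^ (2:ℕ) by norm_num, Real.log_pow]; push_cast; ring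
  rw [div_lt_iff₀ log2_pos]; nlinarith

lemma beta_pos : (0:ℝ) < Real.log 3 / Real.log 2 := by linarith [beta_gt]

noncomputable def Ff : ℝ → ℝ := fun x =>
  Real.log (1 + 2 * Real.cosh ((Real.log 3 / Real.log 2) * x))
    - (Real.log 3 / Real.log 2) * Real.log (2 * Real.cosh x)

lemma one_add_cosh_pos (t : ℝ) : (0:ℝ) < 1 + 2 * Real.cosh t := by
  nlinarith [Real.one_le_cosh t]

lemma Ff_hasDerivAt (x : ℝ) :
    HasDerivAt Ff ((Real.log 3 / Real.log 2) *
        (2 * Real.sinh (((Real.log 3 / Real.log 2) - 1) * x) - Real.sinh x) /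
      ((1 + 2 * Real.cosh ((Real.log 3 / Real.log 2) * x)) * Real.cosh x)) x := by
  set β := Real.log 3 / Real.log 2 with hβ
  have d1 : HasDerivAt (fun y => 1 + 2 * Real.cosh (β * y)) (2 * (β * Real.sinh (β * x))) x :=
    ((cosh_mul_hasDerivAt β x).const_mul 2).const_add 1
  have h1 : (1 + 2 * Real.cosh (β * x)) ≠ 0 := (one_add_cosh_pos _).ne'
  have d2 : HasDerivAt (fun y => 2 * Real.cosh y) (2 * Real.sinh x) x :=
    (Real.hasDerivAt_cosh x).const_mul 2
  have h2 : (2 * Real.cosh x) ≠ 0 := by positivity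
  have hF := (d1.log h1).sub ((d2.log h2).const_mul β)
  refine hF.congr_deriv ?_
  rw [show (β - 1) * x = β * x - x by ring, Real.sinh_sub]
  have hc1 : (0:ℝ) < 1 + 2 * Real.cosh (β * x) := one_add_cosh_pos _
  have hc2 : (0:ℝ) < Real.cosh x := Real.cosh_pos x
  field_simp
  ring

lemma Ff_eq (x : ℝ) : Ff x =
    Real.log (1 + Real.exp (-((Real.log 3 / Real.log 2) * x))
        + Real.exp (-(2 * ((Real.log 3 / Real.log 2) * x))))
      - (Real.log 3 / Real.log 2) * Real.log (1 + Real.exp (-(2 * x))) := by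
  set β := Real.log 3 / Real.log 2 with hβ
  have e1 : 1 + 2 * Real.cosh (β * x)
      = Real.exp (β * x) * (1 + Real.exp (-(β * x)) + Real.exp (-(2 * (β * x)))) := by
    rw [Real.cosh_eq]
    rw [mul_add, mul_add, mul_one, ← Real.exp_add, ← Real.exp_add]
    ring_nf
    rw [Real.exp_zero]
    ring
  have e2 : 2 * Real.cosh x = Real.exp x * (1 + Real.exp (-(2 * x))) := by
    rw [Real.cosh_eq, mul_add, mul_one, ← Real.exp_add]
    ring_nf
  have p1 : (0:ℝ) < 1 + Real.exp (-(β * x)) + Real.exp (-(2 * (β * x))) := by positivity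
  have p2 : (0:ℝ) < 1 + Real.exp (-(2 * x)) := by positivity
  rw [Ff]
  rw [e1, e2, Real.log_mul (Real.exp_pos _).ne' p1.ne',
    Real.log_mul (Real.exp_pos _).ne' p2.ne', Real.log_exp, Real.log_exp]
  ring

lemma Ff_tendsto : Tendsto Ff atTop (nhds 0) := by
  set β := Real.log 3 / Real.log 2 with hβ
  have hb : Tendsto (fun x : ℝ => β * x) atTop atTop :=
    Tendsto.const_mul_atTop beta_pos tendsto_id
  have h1 : Tendsto (fun x : ℝ => Real.exp (-(β * x))) atTop (nhds 0) :=
    Real.tendsto_exp_atBot.comp (tendsto_neg_atBot_iff.2 hb)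
  have h2 : Tendsto (fun x : ℝ => Real.exp (-(2 * (β * x)))) atTop (nhds 0) :=
    Real.tendsto_exp_atBot.comp (tendsto_neg_atBot_iff.2
      (Tendsto.const_mul_atTop (by norm_num) hb))
  have h3 : Tendsto (fun x : ℝ => Real.exp (-(2 * x))) atTop (nhds 0) :=
    Real.tendsto_exp_atBot.comp (tendsto_neg_atBot_iff.2
      (Tendsto.const_mul_atTop (by norm_num) tendsto_id))
  have hA : Tendsto (fun x : ℝ => 1 + Real.exp (-(β * x)) + Real.exp (-(2 * (β * x))))
      atTop (nhds 1) := by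
    have := ((tendsto_const_nhds (x := (1:ℝ))).add h1).add h2
    simpa using this
  have hB : Tendsto (fun x : ℝ => 1 + Real.exp (-(2 * x))) atTop (nhds 1) := by
    have := (tendsto_const_nhds (x := (1:ℝ))).add h3
    simpa using this
  have hlogA : Tendsto (fun x : ℝ => Real.log (1 + Real.exp (-(β * x))
      + Real.exp (-(2 * (β * x))))) atTop (nhds 0) := by
    have := (Real.continuousAt_log (x := 1) one_ne_zero).tendsto.comp hA
    simpa [Function.comp_def] using this
  have hlogB : Tendsto (fun x : ℝ => Real.log (1 + Real.exp (-(2 * x)))) atTop (nhds 0) := by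
    have := (Real.continuousAt_log (x := 1) one_ne_zero).tendsto.comp hB
    simpa [Function.comp_def] using this
  have := hlogA.sub (hlogB.const_mul β)
  simp only [mul_zero, sub_zero] at this
  have heq : Ff = fun x => Real.log (1 + Real.exp (-(β * x)) + Real.exp (-(2 * (β * x))))
      - β * Real.log (1 + Real.exp (-(2 * x))) := funext Ff_eq
  rw [heq]
  simpa using this

lemma Ff_zero : Ff 0 = 0 := by
  have : (Real.log 3 / Real.log 2) * Real.log 2 = Real.log 3 := beta_mul_log2
  simp only [Ff, mul_zero, Real.cosh_zero, mul_one]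
  norm_num [this]

lemma Ff_even (x : ℝ) : Ff (-x) = Ff x := by
  simp only [Ff, mul_neg, Real.cosh_neg]

lemma Ff_nonneg_of_nonneg {x : ℝ} (hx : 0 ≤ x) : 0 ≤ Ff x := by
  set β := Real.log 3 / Real.log 2 with hβ
  have hγ0 : 0 ≤ β - 1 := by have := beta_gt; rw [← hβ] at this; linarith
  have hγ1 : β - 1 ≤ 1 := by have := beta_lt; rw [← hβ] at this; linarith
  have hβpos : 0 < β := beta_pos
  by_cases hcase : ∀ y ∈ Icc (0:ℝ) x, Real.sinh y ≤ 2 * Real.sinh ((β - 1) * y)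
  · have hmono : MonotoneOn Ff (Icc 0 x) := by
      apply monotoneOn_of_deriv_nonneg (convex_Icc 0 x)
      · exact fun y _ => (Ff_hasDerivAt y).differentiableAt.continuousAt.continuousWithinAt
      · exact fun y _ => (Ff_hasDerivAt y).differentiableAt.differentiableWithinAt
      · intro y hy
        rw [interior_Icc] at hy
        rw [(Ff_hasDerivAt y).deriv]
        apply div_nonneg
        · have := hcase y ⟨hy.1.le, hy.2.le⟩
          have h2 : 0 ≤ 2 * Real.sinh ((β - 1) * y) - Real.sinh y := by linarith
          exact mul_nonneg hβpos.le h2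
        · exact mul_nonneg (one_add_cosh_pos _).le (Real.cosh_pos y).le
    have := hmono (show (0:ℝ) ∈ Icc (0:ℝ) x from ⟨le_refl 0, hx⟩)
      (show x ∈ Icc (0:ℝ) x from ⟨hx, le_refl x⟩) hx
    rw [Ff_zero] at this
    exact this
  · push_neg at hcase
    obtain ⟨y, hy, hlt⟩ := hcase
    have hy0 : 0 < y := hy.1.lt_of_ne (by rintro rfl; simp at hlt)
    have hpersist : ∀ z, y ≤ z → 2 * Real.sinh ((β - 1) * z) ≤ Real.sinh z := by
      intro z hz
      have hL2 := L2 (β - 1) hγ0 hγ1 hy0 hz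
      have hsy : 0 < Real.sinh y := Real.sinh_pos_iff.2 hy0
      have hsz : 0 < Real.sinh z := Real.sinh_pos_iff.2 (lt_of_lt_of_le hy0 hz)
      have h1 : 2 * Real.sinh ((β - 1) * y) * Real.sinh z ≤ Real.sinh y * Real.sinh z := by
        nlinarith
      nlinarith
    have hanti : AntitoneOn Ff (Ici y) := by
      apply antitoneOn_of_deriv_nonpos (convex_Ici y)
      · exact fun z _ => (Ff_hasDerivAt z).differentiableAt.continuousAt.continuousWithinAt
      · exact fun z _ => (Ff_hasDerivAt z).differentiableAt.differentiableWithinAt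
      · intro z hz
        rw [interior_Ici] at hz
        rw [(Ff_hasDerivAt z).deriv]
        apply div_nonpos_of_nonpos_of_nonneg
        · have := hpersist z hz.le
          have h2 : 2 * Real.sinh ((β - 1) * z) - Real.sinh z ≤ 0 := by linarith
          exact mul_nonpos_of_nonneg_of_nonpos hβpos.le h2
        · exact mul_nonneg (one_add_cosh_pos _).le (Real.cosh_pos z).le
    have hev : ∀ᶠ z in atTop, Ff z ≤ Ff x :=
      eventually_atTop.2 ⟨x, fun z hz =>
        hanti (mem_Ici.2 hy.2) (mem_Ici.2 (le_trans hy.2 hz)) hz⟩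
    exact le_of_tendsto Ff_tendsto hev

lemma Ff_nonneg (x : ℝ) : 0 ≤ Ff x := by
  rcases le_or_gt 0 x with hx | hx
  · exact Ff_nonneg_of_nonneg hx
  · rw [← Ff_even]; exact Ff_nonneg_of_nonneg (by linarith)

lemma two_cosh_rpow_le (x : ℝ) :
    (2 * Real.cosh x) ^ (Real.log 3 / Real.log 2)
      ≤ 1 + 2 * Real.cosh ((Real.log 3 / Real.log 2) * x) := by
  have h := Ff_nonneg x
  unfold Ff at h
  rw [Real.rpow_def_of_pos (by positivity)]
  calc Real.exp (Real.log (2 * Real.cosh x) * (Real.log 3 / Real.log 2))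
      ≤ Real.exp (Real.log (1 + 2 * Real.cosh ((Real.log 3 / Real.log 2) * x))) := by
        apply Real.exp_le_exp.2; linarith [mul_comm (Real.log (2 * Real.cosh x)) (Real.log 3 / Real.log 2)]
    _ = 1 + 2 * Real.cosh ((Real.log 3 / Real.log 2) * x) := Real.exp_log (one_add_cosh_pos _)

lemma log4_eq : Real.log 4 = 2 * Real.log 2 := by
  rw [show (4:ℝ) = 2 ^ (2:ℕ) by norm_num, Real.log_pow]; push_cast; ring

lemma log4_pos : (0:ℝ) < Real.log 4 := Real.log_pos (by norm_num)

lemma alpha_pos : (0:ℝ) < Real.log 3 / Real.log 4 :=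
  div_pos (Real.log_pos (by norm_num)) log4_pos

lemma two_alpha : 2 * (Real.log 3 / Real.log 4) = Real.log 3 / Real.log 2 := by
  rw [log4_eq]
  field_simp

lemma claimC {s : ℝ} (hs : 0 ≤ s) :
    (1 + s) ^ (Real.log 3 / Real.log 2)
      ≤ 1 + s ^ (Real.log 3 / Real.log 4) + s ^ (Real.log 3 / Real.log 2) := by
  set α := Real.log 3 / Real.log 4 with hα
  set β := Real.log 3 / Real.log 2 with hβ'
  have h2a : 2 * α = β := two_alpha
  rcases eq_or_lt_of_le hs with rfl | hs
  · simp [Real.zero_rpow (x := α) alpha_pos.ne', Real.zero_rpow (x := β) beta_pos.ne']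
  · set x := Real.log s / 2 with hx
    have hexp2x : Real.exp (2 * x) = s := by
      rw [hx, show 2 * (Real.log s / 2) = Real.log s by ring, Real.exp_log hs]
    have hcosh : 2 * Real.cosh x = Real.exp x + Real.exp (-x) := by
      rw [Real.cosh_eq]; ring
    have h1s : 1 + s = Real.exp x * (2 * Real.cosh x) := by
      rw [hcosh, mul_add, ← Real.exp_add, ← Real.exp_add, show x + -x = 0 by ring,
        Real.exp_zero, show x + x = 2 * x by ring, hexp2x]
      ring
    have hsα : s ^ α = Real.exp (x * β) := by
      rw [Real.rpow_def_of_pos hs]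
      congr 1
      rw [hx]; rw [← h2a]; ring
    have hsβ : s ^ β = Real.exp (2 * x * β) := by
      rw [Real.rpow_def_of_pos hs]
      congr 1
      rw [hx]; ring
    have hmul : (1 + s) ^ β = Real.exp (x * β) * (2 * Real.cosh x) ^ β := by
      rw [h1s, Real.mul_rpow (Real.exp_pos x).le (by positivity),
        Real.rpow_def_of_pos (Real.exp_pos x), Real.log_exp]
    have hkey := two_cosh_rpow_le x
    have hstep : (1 + s) ^ β ≤ Real.exp (x * β) * (1 + 2 * Real.cosh (β * x)) := by
      rw [hmul]
      exact mul_le_mul_of_nonneg_left hkey (Real.exp_pos _).le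
    have hfinal : Real.exp (x * β) * (1 + 2 * Real.cosh (β * x))
        = 1 + Real.exp (x * β) + Real.exp (2 * x * β) := by
      have hc : 2 * Real.cosh (β * x) = Real.exp (β * x) + Real.exp (-(β * x)) := by
        rw [Real.cosh_eq]; ring
      rw [hc, mul_add, mul_add, mul_one, ← Real.exp_add, ← Real.exp_add,
        show x * β + β * x = 2 * x * β by ring, show x * β + -(β * x) = 0 by ring,
        Real.exp_zero]
      ring
    rw [hsα, hsβ]
    calc (1 + s) ^ β ≤ Real.exp (x * β) * (1 + 2 * Real.cosh (β * x)) := hstep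
      _ = 1 + Real.exp (x * β) + Real.exp (2 * x * β) := hfinal

lemma twoVar {s t : ℝ} (hs : 0 ≤ s) (ht : 0 ≤ t) (hst : s * t ≤ 1) :
    (1 + s) ^ (Real.log 3 / Real.log 4) * (1 + t) ^ (Real.log 3 / Real.log 4)
      ≤ 1 + s ^ (Real.log 3 / Real.log 4) + t ^ (Real.log 3 / Real.log 4) := by
  set α := Real.log 3 / Real.log 4 with hα
  have hsq : ∀ u : ℝ, 0 ≤ u → u ^ (Real.log 3 / Real.log 2) = (u ^ α) ^ 2 := by
    intro u hu
    rw [← two_alpha, ← Real.rpow_natCast (u ^ α) 2, ← Real.rpow_mul hu]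
    norm_num
    rw [mul_comm]
  set a := s ^ α with ha
  set b := t ^ α with hb
  have ha0 : 0 ≤ a := Real.rpow_nonneg hs _
  have hb0 : 0 ≤ b := Real.rpow_nonneg ht _
  have hab : a * b ≤ 1 := by
    rw [ha, hb, ← Real.mul_rpow hs ht]
    calc (s * t) ^ α ≤ 1 ^ α := Real.rpow_le_rpow (by positivity) hst alpha_pos.le
      _ = 1 := Real.one_rpow _
  have hCs := claimC hs
  have hCt := claimC ht
  rw [hsq (1 + s) (by linarith), hsq s hs] at hCs
  rw [hsq (1 + t) (by linarith), hsq t ht] at hCt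
  have h1s : 0 ≤ (1 + s) ^ α := Real.rpow_nonneg (by linarith) _
  have h1t : 0 ≤ (1 + t) ^ α := Real.rpow_nonneg (by linarith) _
  have hprod : ((1 + s) ^ α * (1 + t) ^ α) ^ 2 ≤ (1 + a + b) ^ 2 := by
    have h1 : ((1 + s) ^ α * (1 + t) ^ α) ^ 2 = ((1 + s) ^ α) ^ 2 * ((1 + t) ^ α) ^ 2 := by ring
    rw [h1]
    calc ((1 + s) ^ α) ^ 2 * ((1 + t) ^ α) ^ 2
        ≤ (1 + a + a ^ 2) * (1 + b + b ^ 2) := by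
          apply mul_le_mul hCs hCt (by positivity) (by nlinarith)
      _ ≤ (1 + a + b) ^ 2 := by nlinarith [mul_nonneg ha0 hb0, mul_nonneg (mul_nonneg ha0 hb0) (mul_nonneg ha0 hb0)]
  exact le_of_pow_le_pow_left₀ (by norm_num) (by nlinarith) hprod

lemma fourVar {x y z w : ℝ} (hx : 0 ≤ x) (hy : 0 ≤ y) (hz : 0 ≤ z) (hw : 0 ≤ w) :
    (x + z) ^ (Real.log 3 / Real.log 4) * (y + w) ^ (Real.log 3 / Real.log 4)
      ≤ x ^ (Real.log 3 / Real.log 4) * y ^ (Real.log 3 / Real.log 4)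
        + z ^ (Real.log 3 / Real.log 4) * w ^ (Real.log 3 / Real.log 4)
        + max (x ^ (Real.log 3 / Real.log 4) * w ^ (Real.log 3 / Real.log 4))
            (z ^ (Real.log 3 / Real.log 4) * y ^ (Real.log 3 / Real.log 4)) := by
  set α := Real.log 3 / Real.log 4 with hα
  -- WLOG x * w ≥ z * y
  rcases le_total (z * y) (x * w) with hcmp | hcmp
  · -- main case: bound max from below by x^α w^α
    have hmax : x ^ α * w ^ α ≤ max (x ^ α * w ^ α) (z ^ α * y ^ α) := le_max_left _ _
    have key : (x + z) ^ α * (y + w) ^ α ≤ x ^ α * y ^ α + z ^ α * w ^ α + x ^ α * w ^ α := by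
      rcases eq_or_lt_of_le hx with rfl | hxpos
      · -- x = 0 : z * y ≤ 0 so z = 0 or y = 0
        have : z * y = 0 := le_antisymm (by simpa using hcmp) (mul_nonneg hz hy)
        rcases mul_eq_zero.1 this with rfl | rfl
        · simp [Real.zero_rpow (x := α) alpha_pos.ne', zero_add]
        · simp [Real.zero_rpow (x := α) alpha_pos.ne']
      · rcases eq_or_lt_of_le hw with rfl | hwpos
        · -- w = 0 : x * 0 = 0 ≥ z * y so z = 0 or y = 0
          have : z * y = 0 := le_antisymm (by simpa using hcmp) (mul_nonneg hz hy)
          rcases mul_eq_zero.1 this with rfl | rfl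
          · simp [Real.zero_rpow (x := α) alpha_pos.ne']
          · simp [Real.zero_rpow (x := α) alpha_pos.ne']
        · -- x > 0, w > 0
          set s := z / x with hs
          set t := y / w with ht
          have hs0 : 0 ≤ s := div_nonneg hz hxpos.le
          have ht0 : 0 ≤ t := div_nonneg hy hwpos.le
          have hst : s * t ≤ 1 := by
            rw [hs, ht, div_mul_div_comm, div_le_one (by positivity)]
            nlinarith
          have h2 := twoVar hs0 ht0 hst
          have hxz : x + z = x * (1 + s) := by
            have hne : x ≠ 0 := hxpos.ne'
            rw [hs]; field_simp
          have hyw : y + w = w * (1 + t) := by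
            have hne : w ≠ 0 := hwpos.ne'
            rw [ht]; field_simp; ring
          have hzx : z ^ α = x ^ α * s ^ α := by
            rw [hs, Real.div_rpow hz hxpos.le]
            field_simp [(Real.rpow_pos_of_pos hxpos α).ne']
          have hyt : y ^ α = w ^ α * t ^ α := by
            rw [ht, Real.div_rpow hy hwpos.le]
            field_simp [(Real.rpow_pos_of_pos hwpos α).ne']
          rw [hxz, hyw, Real.mul_rpow hxpos.le (by linarith), Real.mul_rpow hwpos.le (by linarith),
            hzx, hyt]
          have hxa : 0 ≤ x ^ α := Real.rpow_nonneg hxpos.le _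
          have hwa : 0 ≤ w ^ α := Real.rpow_nonneg hwpos.le _
          calc x ^ α * (1 + s) ^ α * (w ^ α * (1 + t) ^ α)
              = x ^ α * w ^ α * ((1 + s) ^ α * (1 + t) ^ α) := by ring
            _ ≤ x ^ α * w ^ α * (1 + s ^ α + t ^ α) :=
                mul_le_mul_of_nonneg_left h2 (mul_nonneg hxa hwa)
            _ = x ^ α * (w ^ α * t ^ α) + x ^ α * s ^ α * w ^ α + x ^ α * w ^ α := by ring
            _ ≤ x ^ α * (w ^ α * t ^ α) + x ^ α * s ^ α * w ^ α + x ^ α * w ^ α := le_refl _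
    linarith [key, hmax]
  · -- symmetric case
    have hmax : z ^ α * y ^ α ≤ max (x ^ α * w ^ α) (z ^ α * y ^ α) := le_max_right _ _
    have key : (z + x) ^ α * (w + y) ^ α ≤ z ^ α * w ^ α + x ^ α * y ^ α + z ^ α * y ^ α := by
      rcases eq_or_lt_of_le hz with rfl | hzpos
      · have : x * w = 0 := le_antisymm (by simpa using hcmp) (mul_nonneg hx hw)
        rcases mul_eq_zero.1 this with rfl | rfl
        · simp [Real.zero_rpow (x := α) alpha_pos.ne', zero_add]
        · simp [Real.zero_rpow (x := α) alpha_pos.ne']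
      · rcases eq_or_lt_of_le hy with rfl | hypos
        · have : x * w = 0 := le_antisymm (by simpa using hcmp) (mul_nonneg hx hw)
          rcases mul_eq_zero.1 this with rfl | rfl
          · simp [Real.zero_rpow (x := α) alpha_pos.ne']
          · simp [Real.zero_rpow (x := α) alpha_pos.ne']
        · set s := x / z with hs
          set t := w / y with ht
          have hs0 : 0 ≤ s := div_nonneg hx hzpos.le
          have ht0 : 0 ≤ t := div_nonneg hw hypos.le
          have hst : s * t ≤ 1 := by
            rw [hs, ht, div_mul_div_comm, div_le_one (by positivity)]
            nlinarith
          have h2 := twoVar hs0 ht0 hst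
          have hxz : z + x = z * (1 + s) := by
            have hne : z ≠ 0 := hzpos.ne'
            rw [hs]; field_simp
          have hyw : w + y = y * (1 + t) := by
            have hne : y ≠ 0 := hypos.ne'
            rw [ht]; field_simp; ring
          have hzx : x ^ α = z ^ α * s ^ α := by
            rw [hs, Real.div_rpow hx hzpos.le]
            field_simp [(Real.rpow_pos_of_pos hzpos α).ne']
          have hyt : w ^ α = y ^ α * t ^ α := by
            rw [ht, Real.div_rpow hw hypos.le]
            field_simp [(Real.rpow_pos_of_pos hypos α).ne']
          rw [hxz, hyw, Real.mul_rpow hzpos.le (by linarith), Real.mul_rpow hypos.le (by linarith),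
            hzx, hyt]
          have hza : 0 ≤ z ^ α := Real.rpow_nonneg hzpos.le _
          have hya : 0 ≤ y ^ α := Real.rpow_nonneg hypos.le _
          calc z ^ α * (1 + s) ^ α * (y ^ α * (1 + t) ^ α)
              = z ^ α * y ^ α * ((1 + s) ^ α * (1 + t) ^ α) := by ring
            _ ≤ z ^ α * y ^ α * (1 + s ^ α + t ^ α) :=
                mul_le_mul_of_nonneg_left h2 (mul_nonneg hza hya)
            _ = z ^ α * (y ^ α * t ^ α) + z ^ α * s ^ α * y ^ α + z ^ α * y ^ α := by ring
            _ ≤ z ^ α * (y ^ α * t ^ α) + z ^ α * s ^ α * y ^ α + z ^ α * y ^ α := le_refl _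
    have hcomm1 : (z + x) = (x + z) := by ring
    have hcomm2 : (w + y) = (y + w) := by ring
    rw [hcomm1, hcomm2] at key
    linarith [key, hmax]

namespace CubeSumset

open Finset

variable {n : ℕ}

/-- slice of a finset of the (n+1)-cube at last coordinate value `k`, projected down -/
noncomputable def slice (A : Finset (Fin (n + 1) → ℕ)) (k : ℕ) : Finset (Fin n → ℕ) :=
  (A.filter (fun a => a (Fin.last n) = k)).image Fin.init

lemma card_slice (A : Finset (Fin (n + 1) → ℕ)) (k : ℕ) :
    (slice A k).card = (A.filter (fun a => a (Fin.last n) = k)).card := by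
  apply Finset.card_image_of_injOn
  intro a ha a' ha' h
  simp only [Finset.coe_filter, Set.mem_setOf_eq] at ha ha'
  have : Fin.snoc (Fin.init a) (a (Fin.last n)) = Fin.snoc (Fin.init a') (a' (Fin.last n)) := by
    rw [h, ha.2, ha'.2]
  rwa [Fin.snoc_init_self, Fin.snoc_init_self] at this

lemma init_add (a b : Fin (n + 1) → ℕ) : Fin.init (a + b) = Fin.init a + Fin.init b := by
  funext i
  simp [Fin.init]

lemma slice_bounded (A : Finset (Fin (n + 1) → ℕ)) (hA : ∀ a ∈ A, ∀ i, a i ≤ 1) (k : ℕ) :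
    ∀ v ∈ slice A k, ∀ i, v i ≤ 1 := by
  intro v hv i
  simp only [slice, Finset.mem_image, Finset.mem_filter] at hv
  obtain ⟨a, ⟨haA, _⟩, rfl⟩ := hv
  exact hA a haA i.castSucc

lemma card_split (A : Finset (Fin (n + 1) → ℕ)) (hA : ∀ a ∈ A, ∀ i, a i ≤ 1) :
    A.card = (slice A 0).card + (slice A 1).card := by
  rw [card_slice, card_slice]
  classical
  have h := Finset.card_filter_add_card_filter_not
    (s := A) (fun a => a (Fin.last n) = 0)
  have heq : A.filter (fun a => ¬ a (Fin.last n) = 0) = A.filter (fun a => a (Fin.last n) = 1) := by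
    ext a
    simp only [Finset.mem_filter]
    constructor
    · rintro ⟨ha, h0⟩
      refine ⟨ha, ?_⟩
      have hle := hA a ha (Fin.last n)
      rcases Nat.le_one_iff_eq_zero_or_eq_one.1 hle with h' | h'
      · exact absurd h' h0
      · exact h'
    · rintro ⟨ha, h1⟩
      exact ⟨ha, by rw [h1]; exact one_ne_zero⟩
  rw [heq] at h
  exact h.symm

lemma sub_incl (A B : Finset (Fin (n + 1) → ℕ)) (ka kb : ℕ) :
    Finset.image₂ (· + ·) (slice A ka) (slice B kb)
      ⊆ slice (Finset.image₂ (· + ·) A B) (ka + kb) := by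
  intro v hv
  simp only [Finset.mem_image₂] at hv
  obtain ⟨v₁, hv₁, v₂, hv₂, rfl⟩ := hv
  simp only [slice, Finset.mem_image, Finset.mem_filter] at hv₁ hv₂ ⊢
  obtain ⟨a, ⟨haA, hak⟩, rfl⟩ := hv₁
  obtain ⟨b, ⟨hbB, hbk⟩, rfl⟩ := hv₂
  refine ⟨a + b, ⟨Finset.mem_image₂.2 ⟨a, haA, b, hbB, rfl⟩, ?_⟩, (init_add a b).symm⟩
  simp [Pi.add_apply, hak, hbk]

lemma card_slice_sum_le (S : Finset (Fin (n + 1) → ℕ)) :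
    (S.filter (fun v => v (Fin.last n) = 0)).card
      + (S.filter (fun v => v (Fin.last n) = 1)).card
      + (S.filter (fun v => v (Fin.last n) = 2)).card ≤ S.card := by
  have d01 : Disjoint (S.filter (fun v => v (Fin.last n) = 0))
      (S.filter (fun v => v (Fin.last n) = 1)) := by
    apply Finset.disjoint_left.2
    intro v hv hv'
    simp only [Finset.mem_filter] at hv hv'
    exact absurd (hv.2.symm.trans hv'.2) (by norm_num)
  have d012 : Disjoint (S.filter (fun v => v (Fin.last n) = 0)
      ∪ S.filter (fun v => v (Fin.last n) = 1)) (S.filter (fun v => v (Fin.last n) = 2)) := by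
    apply Finset.disjoint_left.2
    intro v hv hv'
    simp only [Finset.mem_union, Finset.mem_filter] at hv hv'
    rcases hv with ⟨_, h⟩ | ⟨_, h⟩ <;> exact absurd (h.symm.trans hv'.2) (by norm_num)
  calc (S.filter (fun v => v (Fin.last n) = 0)).card
        + (S.filter (fun v => v (Fin.last n) = 1)).card
        + (S.filter (fun v => v (Fin.last n) = 2)).card
      = ((S.filter (fun v => v (Fin.last n) = 0) ∪ S.filter (fun v => v (Fin.last n) = 1))
          ∪ S.filter (fun v => v (Fin.last n) = 2)).card := by
        rw [Finset.card_union_of_disjoint d012, Finset.card_union_of_disjoint d01]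
    _ ≤ S.card := Finset.card_le_card (by
        intro v hv
        simp only [Finset.mem_union, Finset.mem_filter] at hv
        rcases hv with (⟨h, _⟩ | ⟨h, _⟩) | ⟨h, _⟩ <;> exact h)

theorem main_ind : ∀ (n : ℕ) (A B : Finset (Fin n → ℕ)),
    (∀ a ∈ A, ∀ i, a i ≤ 1) → (∀ b ∈ B, ∀ i, b i ≤ 1) →
    (A.card : ℝ) ^ (Real.log 3 / Real.log 4) * (B.card : ℝ) ^ (Real.log 3 / Real.log 4) ≤
      ((Finset.image₂ (· + ·) A B).card : ℝ) := by
  intro n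
  induction n with
  | zero =>
    intro A B _ _
    rcases Finset.eq_empty_or_nonempty A with rfl | hAne
    · simp [Real.zero_rpow alpha_pos.ne']
    rcases Finset.eq_empty_or_nonempty B with rfl | hBne
    · simp [Real.zero_rpow alpha_pos.ne']
    have hsub : ∀ x y : Fin 0 → ℕ, x = y := fun x y => funext (fun i => i.elim0)
    have hA1 : A.card = 1 := by
      obtain ⟨a, ha⟩ := hAne
      rw [Finset.eq_singleton_iff_unique_mem.2 ⟨ha, fun x _ => hsub x a⟩]
      exact Finset.card_singleton a
    have hB1 : B.card = 1 := by
      obtain ⟨b, hb⟩ := hBne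
      rw [Finset.eq_singleton_iff_unique_mem.2 ⟨hb, fun x _ => hsub x b⟩]
      exact Finset.card_singleton b
    have hS : 1 ≤ (Finset.image₂ (· + ·) A B).card :=
      Finset.card_pos.2 (Finset.Nonempty.image₂ hAne hBne)
    rw [hA1, hB1]
    simp only [Nat.cast_one, Real.one_rpow, one_mul]
    exact_mod_cast hS
  | succ n ih =>
    intro A B hA hB
    set α := Real.log 3 / Real.log 4 with hα
    set S := Finset.image₂ (· + ·) A B with hS
    set A0 := slice A 0; set A1 := slice A 1
    set B0 := slice B 0; set B1 := slice B 1
    have hA0 := slice_bounded A hA 0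
    have hA1 := slice_bounded A hA 1
    have hB0 := slice_bounded B hB 0
    have hB1 := slice_bounded B hB 1
    -- IH applications combined with slice inclusions
    have bound : ∀ ka kb : ℕ,
        ((slice A ka).card : ℝ) ^ α * ((slice B kb).card : ℝ) ^ α ≤
          ((S.filter (fun v => v (Fin.last n) = ka + kb)).card : ℝ) := by
      intro ka kb
      calc ((slice A ka).card : ℝ) ^ α * ((slice B kb).card : ℝ) ^ α
          ≤ ((Finset.image₂ (· + ·) (slice A ka) (slice B kb)).card : ℝ) :=
            ih (slice A ka) (slice B kb) (slice_bounded A hA ka) (slice_bounded B hB kb)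
        _ ≤ ((slice S (ka + kb)).card : ℝ) := by
            exact_mod_cast Finset.card_le_card (sub_incl A B ka kb)
        _ = ((S.filter (fun v => v (Fin.last n) = ka + kb)).card : ℝ) := by
            rw [card_slice]
    have hsplitA : (A.card : ℝ) = (A0.card : ℝ) + (A1.card : ℝ) := by
      rw [← Nat.cast_add]; exact_mod_cast card_split A hA
    have hsplitB : (B.card : ℝ) = (B0.card : ℝ) + (B1.card : ℝ) := by
      rw [← Nat.cast_add]; exact_mod_cast card_split B hB
    have hfour := fourVar (x := (A0.card : ℝ)) (y := (B0.card : ℝ))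
      (z := (A1.card : ℝ)) (w := (B1.card : ℝ))
      (by positivity) (by positivity) (by positivity) (by positivity)
    rw [hsplitA, hsplitB]
    have c0 := bound 0 0
    have c2 := bound 1 1
    have c10 := bound 0 1
    have c11 := bound 1 0
    have hmax : max ((A0.card : ℝ) ^ α * (B1.card : ℝ) ^ α)
        ((A1.card : ℝ) ^ α * (B0.card : ℝ) ^ α)
        ≤ ((S.filter (fun v => v (Fin.last n) = 1)).card : ℝ) := by
      apply max_le
      · simpa using c10
      · simpa using c11
    have hsum := card_slice_sum_le S
    have hsumR : ((S.filter (fun v => v (Fin.last n) = 0)).card : ℝ)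
        + ((S.filter (fun v => v (Fin.last n) = 1)).card : ℝ)
        + ((S.filter (fun v => v (Fin.last n) = 2)).card : ℝ) ≤ (S.card : ℝ) := by
      exact_mod_cast hsum
    calc ((A0.card : ℝ) + (A1.card : ℝ)) ^ α * ((B0.card : ℝ) + (B1.card : ℝ)) ^ α
        ≤ (A0.card : ℝ) ^ α * (B0.card : ℝ) ^ α + (A1.card : ℝ) ^ α * (B1.card : ℝ) ^ α
          + max ((A0.card : ℝ) ^ α * (B1.card : ℝ) ^ α)
              ((A1.card : ℝ) ^ α * (B0.card : ℝ) ^ α) := hfour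
      _ ≤ ((S.filter (fun v => v (Fin.last n) = 0)).card : ℝ)
          + ((S.filter (fun v => v (Fin.last n) = 2)).card : ℝ)
          + ((S.filter (fun v => v (Fin.last n) = 1)).card : ℝ) := by
          have h0 : (A0.card : ℝ) ^ α * (B0.card : ℝ) ^ α
              ≤ ((S.filter (fun v => v (Fin.last n) = 0)).card : ℝ) := by simpa using c0
          have h2 : (A1.card : ℝ) ^ α * (B1.card : ℝ) ^ α
              ≤ ((S.filter (fun v => v (Fin.last n) = 2)).card : ℝ) := by simpa using c2
          linarith [hmax]
      _ ≤ (S.card : ℝ) := by linarith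
end CubeSumset

/-- The sumset inequality for subsets of the discrete cube: if `A, B ⊆ {0,1}^n` and
`A + B = {a + b : a ∈ A, b ∈ B}` (coordinatewise integer addition), then
`|A + B| ≥ |A|^α · |B|^α` where `α = log 3 / log 4`. -/
theorem cube_sumset_inequality (n : ℕ) (hn : 1 ≤ n) (A B : Finset (Fin n → ℕ))
    (hA : ∀ a ∈ A, ∀ i, a i ≤ 1) (hB : ∀ b ∈ B, ∀ i, b i ≤ 1) :
    (A.card : ℝ) ^ (Real.log 3 / Real.log 4) * (B.card : ℝ) ^ (Real.log 3 / Real.log 4) ≤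
      ((Finset.image₂ (· + ·) A B).card : ℝ) :=
  CubeSumset.main_ind n A B hA hB
end Beta
end
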